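/- arXiv:1709.01124 — 10 statements merged into one kernel-verified Lean document; each statement's English description precedes it below -/
import Mathlib

section
/- For every instance (G, T^1,…,T^K, c) of the Steiner Forest problem, the projection of the directed flow polytope 𝔏^{df} onto the x-variables equals the projection of the directed cut polytope 𝔏^{dc} onto the x-variables, i.e. Proj_x(𝔏^{df}) = Proj_x(𝔏^{dc}). -/
open Finset
open scoped Classical

noncomputable section

variable {V : Type} [Fintype V] [DecidableEq V]

/-- `g(δ⁺(S))`: the value of the arc vector `g` on the arcs leaving `S`. -/
def acutOut (g : V → V → ℝ) (S : Finset V) : ℝ :=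
  ∑ i ∈ S, ∑ j ∈ Sᶜ, g i j

/-- Membership in the directed flow polytope `𝔏^{df}`:
like `𝔏^{uf}`, but with the strengthened capacity constraints
`0 ≤ f^s_{ij} + f^t_{ji} ≤ x_{ij}` for any two non-root terminals `s, t`
of the *same* terminal set. -/
def memLdf (G : SimpleGraph V) {K : ℕ} (T : Fin K → Finset V) (r : Fin K → V)
    (x : Sym2 V → ℝ) (f : V → V → V → ℝ) : Prop :=
  (∀ e ∈ G.edgeSet, 0 ≤ x e ∧ x e ≤ 1) ∧
  (∀ k : Fin K, ∀ t ∈ T k, t ≠ r k →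
    (∀ i j : V, ¬ G.Adj i j → f t i j = 0) ∧
    (∀ i j : V, 0 ≤ f t i j ∧ f t i j ≤ 1) ∧
    (∀ i : V, (∑ j, f t i j) - (∑ j, f t j i) =
        (if i = r k then 1 else 0) - (if i = t then 1 else 0))) ∧
  (∀ k : Fin K, ∀ s ∈ T k, s ≠ r k → ∀ t ∈ T k, t ≠ r k →
    ∀ i j : V, G.Adj i j →
      0 ≤ f s i j + f t j i ∧ f s i j + f t j i ≤ x s(i, j))

/-- Membership in the directed cut polytope `𝔏^{dc}`:
`x ∈ [0,1]^E` together with, for each `k`, an arc vector `y k ∈ [0,1]^{arcs}` with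
`y^k(δ⁺(S)) ≥ 1` for every cut-set `S` relevant for `T k`, and
`y^k_{ij} + y^k_{ji} ≤ x_{ij}` on every edge. -/
def memLdc (G : SimpleGraph V) {K : ℕ} (T : Fin K → Finset V) (r : Fin K → V)
    (x : Sym2 V → ℝ) (y : Fin K → V → V → ℝ) : Prop :=
  (∀ e ∈ G.edgeSet, 0 ≤ x e ∧ x e ≤ 1) ∧
  (∀ k : Fin K,
    (∀ i j : V, ¬ G.Adj i j → y k i j = 0) ∧
    (∀ i j : V, 0 ≤ y k i j ∧ y k i j ≤ 1) ∧
    (∀ S : Finset V, r k ∈ S → (∃ t ∈ T k, t ∉ S) → 1 ≤ acutOut (y k) S) ∧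
    (∀ i j : V, G.Adj i j → y k i j + y k j i ≤ x s(i, j)))

set_option linter.unusedSectionVars false
set_option maxHeartbeats 1000000

/-- Divergence of an arc vector at a vertex. -/
def dvg (f : V → V → ℝ) (i : V) : ℝ := (∑ j, f i j) - ∑ j, f j i

lemma dvg_sum (f : V → V → ℝ) (S : Finset V) :
    ∑ i ∈ S, dvg f i = acutOut f S - acutOut (fun a b => f b a) S := by
  unfold dvg acutOut
  have h1 : ∀ g : V → V → ℝ, ∀ i : V, (∑ j, g i j) = (∑ j ∈ S, g i j) + ∑ j ∈ Sᶜ, g i j :=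
    fun g i => (Finset.sum_add_sum_compl S _).symm
  have h3 : ∑ i ∈ S, ∑ j ∈ S, f i j = ∑ i ∈ S, ∑ j ∈ S, f j i := Finset.sum_comm
  simp only [h1 f, h1 (fun a b => f b a)]
  rw [Finset.sum_sub_distrib, Finset.sum_add_distrib, Finset.sum_add_distrib]
  linarith [h3]

lemma dvg_sum_univ (f : V → V → ℝ) : ∑ i, dvg f i = 0 := by
  unfold dvg
  rw [Finset.sum_sub_distrib, Finset.sum_comm]
  ring

lemma dvg_update (g : V → V → ℝ) (j j' : V) (hjj : j ≠ j') (α β : ℝ) (i : V) :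
    dvg (fun a b => if a = j ∧ b = j' then g a b + α else if a = j' ∧ b = j then g a b + β else g a b) i
      = dvg g i + (α - β) * ((if i = j then 1 else 0) - (if i = j' then 1 else 0)) := by
  have key : ∀ a b : V,
      (if a = j ∧ b = j' then g a b + α else if a = j' ∧ b = j then g a b + β else g a b)
      = g a b + (if a = j then if b = j' then α else 0 else 0)
          + (if a = j' then if b = j then β else 0 else 0) := by
    intro a b
    by_cases h1 : a = j <;> by_cases h2 : b = j' <;> by_cases h3 : a = j' <;> by_cases h4 : b = j <;>
      simp_all
  simp only [dvg, key]
  rw [Finset.sum_add_distrib, Finset.sum_add_distrib, Finset.sum_add_distrib, Finset.sum_add_distrib]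
  simp only [Finset.sum_ite_eq', Finset.mem_univ, if_true]
  by_cases h1 : i = j <;> by_cases h2 : i = j' <;> simp_all <;> ring

/-- The set of feasible `r`–`t` flows of arbitrary value under capacities `c`. -/
def flowSet (c : V → V → ℝ) (r t : V) : Set (V → V → ℝ) :=
  {f | (∀ i j, 0 ≤ f i j ∧ f i j ≤ c i j) ∧ ∀ i, i ≠ r → i ≠ t → dvg f i = 0}

lemma exists_max_flow (c : V → V → ℝ) (hc : ∀ i j, 0 ≤ c i j) (r t : V) :
    ∃ f ∈ flowSet c r t, IsMaxOn (fun g => dvg g r) (flowSet c r t) f := by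
  have heval : ∀ i j : V, Continuous fun f : V → V → ℝ => f i j :=
    fun i j => (continuous_apply j).comp (continuous_apply i)
  have hdvg : ∀ i : V, Continuous fun f : V → V → ℝ => dvg f i := by
    intro i
    unfold dvg
    exact (continuous_finset_sum _ fun j _ => heval i j).sub
      (continuous_finset_sum _ fun j _ => heval j i)
  have hB : IsCompact (Set.univ.pi fun i : V => Set.univ.pi fun j : V => Set.Icc 0 (c i j)) :=
    isCompact_univ_pi fun i => isCompact_univ_pi fun j => isCompact_Icc
  have hclosed : IsClosed (flowSet c r t) := by
    have h1 : flowSet c r t =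
        (⋂ i : V, ⋂ j : V, {f : V → V → ℝ | f i j ∈ Set.Icc 0 (c i j)}) ∩
        (⋂ i : V, {f : V → V → ℝ | i ≠ r → i ≠ t → dvg f i = 0}) := by
      ext f
      simp only [Set.mem_inter_iff, Set.mem_iInter, Set.mem_setOf_eq, Set.mem_Icc, flowSet]
    rw [h1]
    refine IsClosed.inter (isClosed_iInter fun i => isClosed_iInter fun j => ?_)
      (isClosed_iInter fun i => ?_)
    · exact (isClosed_Icc).preimage (heval i j)
    · by_cases h1 : i = r
      · simp [h1]
      by_cases h2 : i = t
      · simp [h2]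
      · have : {f : V → V → ℝ | i ≠ r → i ≠ t → dvg f i = 0} = {f | dvg f i = 0} := by
          ext f; simp [h1, h2]
        rw [this]
        exact isClosed_eq (hdvg i) continuous_const
  have hsub : flowSet c r t ⊆ Set.univ.pi fun i : V => Set.univ.pi fun j : V => Set.Icc 0 (c i j) := by
    intro f hf
    simp only [Set.mem_pi, Set.mem_univ, forall_true_left, Set.mem_Icc]
    exact fun i j => hf.1 i j
  have hcomp : IsCompact (flowSet c r t) := hB.of_isClosed_subset hclosed hsub
  have hne : (flowSet c r t).Nonempty := by
    refine ⟨fun _ _ => 0, fun i j => ⟨le_refl _, hc i j⟩, fun i _ _ => by simp [dvg]⟩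
  exact hcomp.exists_isMaxOn hne ((hdvg r).continuousOn)

/-- Max-flow/min-cut style existence: if every `r`–`t` cut has capacity at least 1,
then there is a feasible flow of value exactly 1. -/
lemma exists_flow (c : V → V → ℝ) (hc : ∀ i j, 0 ≤ c i j) (r t : V) (hrt : r ≠ t)
    (hcut : ∀ S : Finset V, r ∈ S → t ∉ S → 1 ≤ acutOut c S) :
    ∃ f : V → V → ℝ, (∀ i j, 0 ≤ f i j ∧ f i j ≤ c i j) ∧
      ∀ i, (∑ j, f i j) - (∑ j, f j i) = (if i = r then 1 else 0) - (if i = t then 1 else 0) := by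
  obtain ⟨f, hfP, hmax⟩ := exists_max_flow c hc r t
  set v := dvg f r with hv
  set R : V → V → Prop := fun a b => a ≠ b ∧ 0 < c a b - f a b + f b a with hR
  have aug : ∀ j, Relation.ReflTransGen R r j →
      ∃ ε C : ℝ, 0 < ε ∧ 0 < C ∧ ∀ δ : ℝ, 0 < δ → δ ≤ ε →
        ∃ g, (∀ a b, 0 ≤ g a b ∧ g a b ≤ c a b) ∧ (∀ a b, |g a b - f a b| ≤ C * δ) ∧
          ∀ i, dvg g i = dvg f i + δ * ((if i = r then 1 else 0) - (if i = j then 1 else 0)) := by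
    intro j h
    induction h with
    | refl =>
      refine ⟨1, 1, one_pos, one_pos, fun δ hδ hδ1 => ⟨f, hfP.1, fun a b => by simp; linarith, fun i => by simp⟩⟩
    | @tail b j' h1 h2 ih =>
      obtain ⟨hbj, hρ⟩ := h2
      obtain ⟨ε, C, hε, hC, hQ⟩ := ih
      set ρ := c b j' - f b j' + f j' b with hρdef
      refine ⟨min ε (ρ / (2 * C + 2)), C + 1, lt_min hε (by positivity), by linarith, ?_⟩
      intro δ hδ hδ'
      obtain ⟨g, hg1, hg2, hg3⟩ := hQ δ hδ (le_trans hδ' (min_le_left _ _))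
      have hδρ : δ * (2 * C + 2) ≤ ρ := by
        have := le_trans hδ' (min_le_right _ _)
        rwa [le_div_iff₀ (by linarith)] at this
      have habs1 := abs_le.mp (hg2 b j')
      have habs2 := abs_le.mp (hg2 j' b)
      have hres : δ ≤ c b j' - g b j' + g j' b := by nlinarith
      set m := min δ (g j' b) with hm
      have hm0 : 0 ≤ m := le_min hδ.le (hg1 j' b).1
      have hmδ : m ≤ δ := min_le_left _ _
      have hmg : m ≤ g j' b := min_le_right _ _
      set g' : V → V → ℝ := fun a b2 =>
        if a = b ∧ b2 = j' then g a b2 + (δ - m)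
        else if a = j' ∧ b2 = b then g a b2 + (-m) else g a b2 with hg'
      have hbounds : ∀ a b2, 0 ≤ g' a b2 ∧ g' a b2 ≤ c a b2 := by
        intro a b2
        have hgb := hg1 a b2
        simp only [hg']
        split_ifs with hc1 hc2
        · obtain ⟨rfl, rfl⟩ := hc1
          constructor
          · linarith [(hg1 a b2).1]
          · rcases le_or_gt δ (g b2 a) with hcase | hcase
            · have : m = δ := min_eq_left hcase
              rw [this]; linarith [(hg1 a b2).2]
            · have : m = g b2 a := min_eq_right hcase.le
              rw [this]; linarith [hres]
        · obtain ⟨rfl, rfl⟩ := hc2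
          constructor
          · linarith [hmg]
          · linarith [(hg1 a b2).2, hm0]
        · exact hgb
      have habs : ∀ a b2, |g' a b2 - f a b2| ≤ (C + 1) * δ := by
        intro a b2
        have h0 := abs_le.mp (hg2 a b2)
        simp only [hg']
        split_ifs with hc1 hc2
        · obtain ⟨rfl, rfl⟩ := hc1
          rw [abs_le]; constructor <;> nlinarith [abs_le.mp (hg2 a b2)]
        · obtain ⟨rfl, rfl⟩ := hc2
          rw [abs_le]; constructor <;> nlinarith [abs_le.mp (hg2 a b2)]
        · rw [abs_le]; constructor <;> nlinarith
      refine ⟨g', hbounds, habs, ?_⟩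
      intro i
      have h4 := dvg_update g b j' hbj (δ - m) (-m) i
      have h5 : dvg g' i = dvg g i + (δ - m - -m) * ((if i = b then 1 else 0) - (if i = j' then 1 else 0)) := h4
      rw [h5, hg3 i]
      ring
  have hnt : ¬ Relation.ReflTransGen R r t := by
    intro h
    obtain ⟨ε, C, hε, hC, hQ⟩ := aug t h
    obtain ⟨g, hg1, _, hg3⟩ := hQ ε hε le_rfl
    have hgP : g ∈ flowSet c r t := by
      refine ⟨hg1, fun i hi1 hi2 => ?_⟩
      rw [hg3 i, hfP.2 i hi1 hi2]
      simp [hi1, hi2]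
    have hle : dvg g r ≤ dvg f r := hmax hgP
    rw [hg3 r, if_pos rfl, if_neg hrt] at hle
    linarith
  set S : Finset V := Finset.univ.filter (fun i => Relation.ReflTransGen R r i) with hS
  have hrS : r ∈ S := Finset.mem_filter.mpr ⟨Finset.mem_univ r, Relation.ReflTransGen.refl⟩
  have htS : t ∉ S := fun h => hnt (Finset.mem_filter.mp h).2
  have hsat : ∀ i ∈ S, ∀ b ∈ Sᶜ, f i b = c i b ∧ f b i = 0 := by
    intro i hi b hb
    have hbS : b ∉ S := Finset.mem_compl.mp hb
    have hib : i ≠ b := fun h => hbS (h ▸ hi)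
    have hnR : ¬ R i b := fun hR' => hbS
      (Finset.mem_filter.mpr ⟨Finset.mem_univ b, (Finset.mem_filter.mp hi).2.tail hR'⟩)
    have hnlt : ¬ (0 < c i b - f i b + f b i) := fun hlt => hnR ⟨hib, hlt⟩
    have h1 := hfP.1 i b
    have h2 := hfP.1 b i
    constructor <;> linarith [not_lt.mp hnlt]
  have hvS : v = acutOut c S := by
    have h1 := dvg_sum f S
    have h2 : ∑ i ∈ S, dvg f i = v := by
      rw [Finset.sum_eq_single r (fun i hi hir => hfP.2 i hir (fun h => htS (h ▸ hi)))
        (fun h => absurd hrS h)]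
    have h3 : acutOut f S = acutOut c S :=
      Finset.sum_congr rfl fun i hi => Finset.sum_congr rfl fun b hb => (hsat i hi b hb).1
    have h4 : acutOut (fun a b => f b a) S = 0 :=
      Finset.sum_eq_zero fun i hi => Finset.sum_eq_zero fun b hb => (hsat i hi b hb).2
    rw [h3, h4] at h1
    linarith
  have hv1 : 1 ≤ v := hvS ▸ hcut S hrS htS
  have hv0 : (0:ℝ) < v := by linarith
  have hdt : dvg f t = -v := by
    have h0 := dvg_sum_univ f
    have h1 : ∑ i ∈ ({r, t} : Finset V), dvg f i + ∑ i ∈ ({r, t} : Finset V)ᶜ, dvg f i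
        = ∑ i, dvg f i := Finset.sum_add_sum_compl _ _
    have h2 : ∑ i ∈ ({r, t} : Finset V), dvg f i = dvg f r + dvg f t := Finset.sum_pair hrt
    have h3 : ∑ i ∈ ({r, t} : Finset V)ᶜ, dvg f i = 0 := by
      refine Finset.sum_eq_zero fun i hi => ?_
      simp only [Finset.mem_compl, Finset.mem_insert, Finset.mem_singleton, not_or] at hi
      exact hfP.2 i hi.1 hi.2
    rw [h2, h3] at h1
    rw [← h1] at h0
    linarith
  refine ⟨fun a b => f a b / v, fun a b => ⟨div_nonneg (hfP.1 a b).1 hv0.le,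
    le_trans (div_le_self (hfP.1 a b).1 hv1) (hfP.1 a b).2⟩, ?_⟩
  intro i
  have hlin : (∑ j, f i j / v) - (∑ j, f j i / v) = dvg f i / v := by
    unfold dvg
    rw [← Finset.sum_div, ← Finset.sum_div]
    ring
  rw [hlin]
  by_cases h1 : i = r
  · subst h1
    rw [← hv, if_pos rfl, if_neg hrt]
    field_simp
    norm_num
  by_cases h2 : i = t
  · subst h2
    rw [hdt, if_neg h1, if_pos rfl]
    field_simp
    norm_num
  · rw [hfP.2 i h1 h2, if_neg h1, if_neg h2]
    simp

/-- For every Steiner Forest instance,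
`Proj_x(𝔏^{df}) = Proj_x(𝔏^{dc})`. -/
theorem proj_Ldf_eq_proj_Ldc (G : SimpleGraph V) {K : ℕ}
    (T : Fin K → Finset V) (r : Fin K → V)
    (hroot : ∀ k, r k ∈ T k)
    (hdisj : ∀ k l : Fin K, k ≠ l → Disjoint (T k) (T l)) :
    {x : Sym2 V → ℝ | ∃ f : V → V → V → ℝ, memLdf G T r x f} =
      {x : Sym2 V → ℝ | ∃ y : Fin K → V → V → ℝ, memLdc G T r x y} := by

  ext x
  simp only [Set.mem_setOf_eq]
  constructor
  · -- flow ⟹ cut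
    rintro ⟨f, hx, hflow, hcap⟩
    set y : Fin K → V → V → ℝ := fun k i j =>
      (insert (0:ℝ) (((T k).erase (r k)).image (fun t => f t i j))).max'
        (Finset.insert_nonempty _ _) with hydef
    have hmem : ∀ (k : Fin K) (i j : V),
        ∀ a ∈ insert (0:ℝ) (((T k).erase (r k)).image (fun t => f t i j)),
        a = 0 ∨ ∃ t, (t ∈ T k ∧ t ≠ r k) ∧ f t i j = a := by
      intro k i j a ha
      rcases Finset.mem_insert.mp ha with h | h
      · exact Or.inl h
      · obtain ⟨t, ht, hfa⟩ := Finset.mem_image.mp h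
        obtain ⟨hne, htT⟩ := Finset.mem_erase.mp ht
        exact Or.inr ⟨t, ⟨htT, hne⟩, hfa⟩
    have hYmem : ∀ (k : Fin K) (i j : V),
        y k i j = 0 ∨ ∃ t, (t ∈ T k ∧ t ≠ r k) ∧ f t i j = y k i j :=
      by intro k i j; simp only [hydef]; exact hmem k i j _ (Finset.max'_mem (insert (0:ℝ) (((T k).erase (r k)).image (fun t => f t i j))) (Finset.insert_nonempty _ _))
    have hle : ∀ (k : Fin K) (i j t : V), t ∈ T k → t ≠ r k → f t i j ≤ y k i j := by
      intro k i j t htT hne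
      simp only [hydef]
      exact Finset.le_max' (insert (0:ℝ) (((T k).erase (r k)).image (fun t => f t i j))) _
        (Finset.mem_insert.mpr (Or.inr
          (Finset.mem_image.mpr ⟨t, Finset.mem_erase.mpr ⟨hne, htT⟩, rfl⟩)))
    have hY0 : ∀ (k : Fin K) (i j : V), 0 ≤ y k i j := by
      intro k i j
      simp only [hydef]
      exact Finset.le_max' (insert (0:ℝ) (((T k).erase (r k)).image (fun t => f t i j))) _
        (Finset.mem_insert_self _ _)
    refine ⟨y, hx, fun k => ⟨?_, ?_, ?_, ?_⟩⟩
    · -- zero on non-adjacent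
      intro i j hAdj
      rcases hYmem k i j with h | ⟨t, ⟨htT, hne⟩, hfa⟩
      · exact h
      · rw [← hfa, (hflow k t htT hne).1 i j hAdj]
    · -- in [0,1]
      intro i j
      rcases hYmem k i j with h | ⟨t, ⟨htT, hne⟩, hfa⟩
      · rw [h]; exact ⟨le_refl 0, zero_le_one⟩
      · exact ⟨hY0 k i j, by rw [← hfa]; exact ((hflow k t htT hne).2.1 i j).2⟩
    · -- cut constraints
      rintro S hrS ⟨t, htT, htS⟩
      have hne : t ≠ r k := fun h => htS (h ▸ hrS)
      have hft := hflow k t htT hne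
      have h1 : acutOut (f t) S ≤ acutOut (y k) S :=
        Finset.sum_le_sum fun i _ => Finset.sum_le_sum fun j _ => hle k i j t htT hne
      have h2 : ∑ i ∈ S, dvg (f t) i = 1 := by
        rw [Finset.sum_eq_single (r k)]
        · show (∑ j, f t (r k) j) - (∑ j, f t j (r k)) = 1
          rw [hft.2.2 (r k), if_pos rfl, if_neg (Ne.symm hne)]
          norm_num
        · intro i hi hir
          have hit : i ≠ t := fun h => htS (h ▸ hi)
          show (∑ j, f t i j) - (∑ j, f t j i) = 0
          rw [hft.2.2 i, if_neg hir, if_neg hit]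
          norm_num
        · intro h; exact absurd hrS h
      have h3 := dvg_sum (f t) S
      have h4 : 0 ≤ acutOut (fun a b => f t b a) S :=
        Finset.sum_nonneg fun i _ => Finset.sum_nonneg fun j _ => (hft.2.1 j i).1
      calc (1:ℝ) = ∑ i ∈ S, dvg (f t) i := h2.symm
        _ ≤ acutOut (f t) S := by rw [h3]; linarith
        _ ≤ acutOut (y k) S := h1
    · -- capacity
      intro i j hAdj
      have hx0 : 0 ≤ x s(i, j) := (hx s(i, j) ((G.mem_edgeSet).mpr hAdj)).1
      rcases hYmem k i j with ha | ⟨s, ⟨hsT, hsne⟩, hfa⟩ <;>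
        rcases hYmem k j i with hb | ⟨u, ⟨huT, hune⟩, hfb⟩
      · rw [ha, hb]; simpa using hx0
      · rw [ha, ← hfb]
        have := (hcap k u huT hune u huT hune i j hAdj).2
        have h5 := ((hflow k u huT hune).2.1 i j).1
        linarith
      · rw [hb, ← hfa]
        have := (hcap k s hsT hsne s hsT hsne i j hAdj).2
        have h5 := ((hflow k s hsT hsne).2.1 j i).1
        linarith
      · rw [← hfa, ← hfb]
        exact (hcap k s hsT hsne u huT hune i j hAdj).2
  · -- cut ⟹ flow
    rintro ⟨y, hx, hy⟩
    have key : ∀ t : V, ∃ g : V → V → ℝ, ∀ k, t ∈ T k → t ≠ r k →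
        (∀ i j, 0 ≤ g i j ∧ g i j ≤ y k i j) ∧
        (∀ i, (∑ j, g i j) - (∑ j, g j i) =
          (if i = r k then 1 else 0) - (if i = t then 1 else 0)) := by
      intro t
      by_cases h : ∃ k, t ∈ T k ∧ t ≠ r k
      · obtain ⟨k₀, ht₀, hne₀⟩ := h
        obtain ⟨g, hg1, hg2⟩ := exists_flow (y k₀) (fun i j => ((hy k₀).2.1 i j).1) (r k₀) t
          (Ne.symm hne₀) (fun S hrS htS => (hy k₀).2.2.1 S hrS ⟨t, ht₀, htS⟩)
        refine ⟨g, fun k ht hne => ?_⟩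
        have hk : k = k₀ := by
          by_contra hkk
          exact absurd ht (Finset.disjoint_right.mp (hdisj k k₀ hkk) ht₀)
        subst hk
        exact ⟨hg1, hg2⟩
      · exact ⟨0, fun k ht hne => absurd ⟨k, ht, hne⟩ h⟩
    choose f hf using key
    refine ⟨f, hx, ?_, ?_⟩
    · intro k t htT hne
      obtain ⟨h1, h2⟩ := hf t k htT hne
      refine ⟨?_, ?_, h2⟩
      · intro i j hAdj
        have h0 := (hy k).1 i j hAdj
        exact le_antisymm (h0 ▸ (h1 i j).2) (h1 i j).1
      · intro i j
        exact ⟨(h1 i j).1, le_trans (h1 i j).2 ((hy k).2.1 i j).2⟩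
    · intro k s hsT hsne t htT htne i j hAdj
      have h1 := (hf s k hsT hsne).1 i j
      have h2 := (hf t k htT htne).1 j i
      have h3 := (hy k).2.2.2 i j hAdj
      exact ⟨add_nonneg h1.1 h2.1, by linarith [h1.2, h2.2]⟩
end
end

section
/- For every instance (G, T^1,…,T^K, c) of the Steiner Forest problem, Proj_x(𝔏^{df}) ⊆ Proj_x(𝔏^{uf}); moreover there exists an instance for which the containment is strict, i.e. Proj_x(𝔏^{uf}) ⊋ Proj_x(𝔏^{df}). -/
open Finset
open scoped Classical

noncomputable section

variable {V : Type} [Fintype V] [DecidableEq V]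

/-- Membership in the undirected flow polytope `𝔏^{uf}`. -/
def memLuf (G : SimpleGraph V) {K : ℕ} (T : Fin K → Finset V) (r : Fin K → V)
    (x : Sym2 V → ℝ) (f : V → V → V → ℝ) : Prop :=
  (∀ e ∈ G.edgeSet, 0 ≤ x e ∧ x e ≤ 1) ∧
  (∀ k : Fin K, ∀ t ∈ T k, t ≠ r k →
    (∀ i j : V, ¬ G.Adj i j → f t i j = 0) ∧
    (∀ i j : V, 0 ≤ f t i j ∧ f t i j ≤ 1) ∧
    (∀ i : V, (∑ j, f t i j) - (∑ j, f t j i) =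
        (if i = r k then 1 else 0) - (if i = t then 1 else 0)) ∧
    (∀ i j : V, G.Adj i j → f t i j + f t j i ≤ x s(i, j)))

/-- Witness flow on the triangle: for terminal `1`, half a unit along `0→1` and
half along `0→2→1`; for terminal `2`, half along `0→2` and half along `0→1→2`. -/
def triFlow : Fin 3 → Fin 3 → Fin 3 → ℝ := fun t i j =>
  match t.val, i.val, j.val with
  | 1, 0, 1 => 1/2 | 1, 0, 2 => 1/2 | 1, 2, 1 => 1/2
  | 2, 0, 1 => 1/2 | 2, 0, 2 => 1/2 | 2, 1, 2 => 1/2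
  | _, _, _ => 0

/-- The easy containment: taking `s = t` in the directed capacity constraints
recovers the undirected capacity constraints. -/
lemma Ldf_subset_Luf {V : Type} [Fintype V] [DecidableEq V] (G : SimpleGraph V) (K : ℕ)
    (T : Fin K → Finset V) (r : Fin K → V) :
    {x : Sym2 V → ℝ | ∃ f, memLdf G T r x f} ⊆
      {x : Sym2 V → ℝ | ∃ f, memLuf G T r x f} := by
  rintro x ⟨f, hf⟩
  exact ⟨f, hf.1, fun k t ht htr =>
    ⟨(hf.2.1 k t ht htr).1, (hf.2.1 k t ht htr).2.1, (hf.2.1 k t ht htr).2.2,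
     fun i j hij => (hf.2.2 k t ht htr t ht htr i j hij).2⟩⟩

/-- The all-`1/2` vector on the triangle is in `Proj_x(𝔏^{uf})`. -/
lemma half_mem_Luf :
    (fun _ => (1/2 : ℝ)) ∈ {x : Sym2 (Fin 3) → ℝ |
      ∃ f, memLuf (⊤ : SimpleGraph (Fin 3)) (fun _ : Fin 1 => Finset.univ)
        (fun _ : Fin 1 => 0) x f} := by
  refine ⟨triFlow, fun e _ => by norm_num, ?_⟩
  intro k t _ htr
  have hr : (fun _ : Fin 1 => (0 : Fin 3)) k = 0 := rfl
  rw [hr] at htr ⊢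
  have hv : t.val = 1 ∨ t.val = 2 := by
    have h3 := t.isLt
    have h0 : t.val ≠ 0 := fun h => htr (Fin.ext h)
    omega
  have ht12 : t = 1 ∨ t = 2 := by
    rcases hv with h | h
    · exact Or.inl (Fin.ext h)
    · exact Or.inr (Fin.ext h)
  rcases ht12 with h | h <;> subst h <;> refine ⟨?_, ?_, ?_, ?_⟩
  all_goals first
  | (intro i j hij
     simp only [SimpleGraph.top_adj, not_not] at hij
     subst hij
     fin_cases i <;> rfl)
  | (intro i j
     fin_cases i <;> fin_cases j <;> norm_num [triFlow])
  | (intro i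
     fin_cases i <;> simp [triFlow, Fin.sum_univ_three] <;> norm_num)
  | (intro i j _
     fin_cases i <;> fin_cases j <;> norm_num [triFlow])

/-- The all-`1/2` vector on the triangle is not in `Proj_x(𝔏^{df})`. -/
lemma half_not_mem_Ldf :
    (fun _ => (1/2 : ℝ)) ∉ {x : Sym2 (Fin 3) → ℝ |
      ∃ f, memLdf (⊤ : SimpleGraph (Fin 3)) (fun _ : Fin 1 => Finset.univ)
        (fun _ : Fin 1 => 0) x f} := by
  rintro ⟨f, hf⟩
  have hne1 : (1 : Fin 3) ≠ (fun _ : Fin 1 => (0 : Fin 3)) 0 := by decide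
  have hne2 : (2 : Fin 3) ≠ (fun _ : Fin 1 => (0 : Fin 3)) 0 := by decide
  have h1 := hf.2.1 0 1 (Finset.mem_univ _) hne1
  have h2 := hf.2.1 0 2 (Finset.mem_univ _) hne2
  -- conservation at the root for both flows, at node 2 for flow 1, at node 1 for flow 2
  have c10 := h1.2.2 0
  have c12 := h1.2.2 2
  have c20 := h2.2.2 0
  have c21 := h2.2.2 1
  simp only [Fin.sum_univ_three] at c10 c12 c20 c21
  norm_num [show ((2:Fin 3) = 0) = False from by simp, show ((2:Fin 3) = 1) = False from by simp,
    show ((1:Fin 3) = 2) = False from by simp, show ((0:Fin 3) = 2) = False from by simp,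
    show ((0:Fin 3) = 1) = False from by simp, show ((1:Fin 3) = 0) = False from by simp]
    at c10 c12 c20 c21
  -- nonnegativity
  have n1 := h1.2.1
  have n2 := h2.2.1
  -- same-terminal capacities at the root edges
  have cap1a := (hf.2.2 0 1 (Finset.mem_univ _) hne1 1 (Finset.mem_univ _) hne1
    0 1 (by simp)).2
  have cap1b := (hf.2.2 0 1 (Finset.mem_univ _) hne1 1 (Finset.mem_univ _) hne1
    0 2 (by simp)).2
  have cap2a := (hf.2.2 0 2 (Finset.mem_univ _) hne2 2 (Finset.mem_univ _) hne2
    0 1 (by simp)).2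
  have cap2b := (hf.2.2 0 2 (Finset.mem_univ _) hne2 2 (Finset.mem_univ _) hne2
    0 2 (by simp)).2
  -- the crucial cross capacity on the arc pair (2,1)/(1,2)
  have cross := (hf.2.2 0 1 (Finset.mem_univ _) hne1 2 (Finset.mem_univ _) hne2
    2 1 (by simp)).2
  norm_num at cap1a cap1b cap2a cap2b cross
  linarith [(n1 1 0).1, (n1 2 0).1, (n1 1 2).1, (n2 1 0).1, (n2 2 0).1, (n2 2 1).1]

/-- For every Steiner Forest instance
`Proj_x(𝔏^{df}) ⊆ Proj_x(𝔏^{uf})`, and there exists an instance for which the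
containment is strict, i.e. `Proj_x(𝔏^{df}) ⊊ Proj_x(𝔏^{uf})`. -/
theorem proj_Ldf_subset_proj_Luf_and_exists_strict :
    (∀ (V : Type) [Fintype V] [DecidableEq V] (G : SimpleGraph V) (K : ℕ)
        (T : Fin K → Finset V) (r : Fin K → V),
      (∀ k, r k ∈ T k) → (∀ k l : Fin K, k ≠ l → Disjoint (T k) (T l)) →
      {x : Sym2 V → ℝ | ∃ f, memLdf G T r x f} ⊆
        {x : Sym2 V → ℝ | ∃ f, memLuf G T r x f}) ∧
    (∃ (n : ℕ) (G : SimpleGraph (Fin n)) (K : ℕ)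
        (T : Fin K → Finset (Fin n)) (r : Fin K → Fin n),
      (∀ k, r k ∈ T k) ∧ (∀ k l : Fin K, k ≠ l → Disjoint (T k) (T l)) ∧
      {x : Sym2 (Fin n) → ℝ | ∃ f, memLdf G T r x f} ⊂
        {x : Sym2 (Fin n) → ℝ | ∃ f, memLuf G T r x f}) := by
  constructor
  · intro V _ _ G K T r _ _
    exact Ldf_subset_Luf G K T r
  · refine ⟨3, ⊤, 1, fun _ => Finset.univ, fun _ => 0,
      fun k => Finset.mem_univ _, fun k l hkl => absurd (Subsingleton.elim k l) hkl, ?_⟩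
    rw [Set.ssubset_def]
    refine ⟨Ldf_subset_Luf _ _ _ _, fun hsub => ?_⟩
    exact half_not_mem_Ldf (hsub half_mem_Luf)
end
end

section
/- Let (x*,y*,a*,w*,z*,R*) be a feasible integer solution to the tree-based formulation IPet. Then the subgraph F_{x*,y*} induced by x* and y* is acyclic and consists of exactly R* connected components. -/
open Finset
open scoped Classical

noncomputable section

variable {V : Type} [Fintype V] [DecidableEq V]

/-- A feasible integer solution of the tree-based formulation `IPet`. -/
def IPetFeasible (G : SimpleGraph V) {K : ℕ} (T : Fin K → Finset V) (r : Fin K → V)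
    (x : Sym2 V → ℝ) (y : V → ℝ) (w : Fin K → Fin K → ℝ)
    (z : V → Fin K → ℝ) (a : Fin K → ℝ) (R : ℕ) : Prop :=
  -- integrality and ranges
  (∀ e ∈ G.edgeSet, x e = 0 ∨ x e = 1) ∧
  (∀ i : V, y i = 0 ∨ y i = 1) ∧
  (∀ k l : Fin K, k < l → (w k l = 0 ∨ w k l = 1)) ∧
  (∀ (i : V) (k : Fin K), z i k = 0 ∨ z i k = 1) ∧
  (∀ k : Fin K, a k = 0 ∨ a k = 1) ∧
  (1 ≤ R ∧ R ≤ K) ∧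
  -- (1)  y(V) − x(E) = R
  ((∑ i : V, y i) - (∑ e ∈ G.edgeFinset, x e) = (R : ℝ)) ∧
  -- (2)  y(S) − x(E[S]) ≥ y_i for all S ⊆ V and i ∈ S
  (∀ S : Finset V, ∀ i ∈ S,
    y i ≤ (∑ j ∈ S, y j) -
      (∑ e ∈ G.edgeFinset.filter (fun e => ∀ v ∈ e, v ∈ S), x e)) ∧
  -- (3)  Σ_k a_k = R
  ((∑ k : Fin K, a k) = (R : ℝ)) ∧
  -- (4)  a_k ≤ 1 − w_{kℓ} for k < ℓ
  (∀ k l : Fin K, k < l → a k ≤ 1 - w k l) ∧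
  -- (5)  coupling of x, z and w
  (∀ i j : V, G.Adj i j → ∀ k l : Fin K, k < l →
    x s(i, j) - (1 - z i k) - (1 - z j l) ≤ w k l ∧
    x s(i, j) - (1 - z i l) - (1 - z j k) ≤ w k l) ∧
  -- (6)  x_{ij} + z_{jk} − 1 ≥ z_{ik} and x_{ij} + z_{ik} − 1 ≥ z_{jk}
  (∀ i j : V, G.Adj i j → ∀ k : Fin K,
    z i k ≤ x s(i, j) + z j k - 1 ∧ z j k ≤ x s(i, j) + z i k - 1) ∧
  -- (7)  transitivity of w
  (∀ k l m : Fin K, k < l → l < m →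
    w k l + w l m - 1 ≤ w k m ∧
    w k m + w l m - 1 ≤ w k l ∧
    w k l + w k m - 1 ≤ w l m) ∧
  -- (8)  fixings for terminals
  (∀ k : Fin K, ∀ i ∈ T k, z i k = 1 ∧ y i = 1)

/-- The graph `F_{x,y}` induced by an `IPet` solution: its vertices are the
nodes `i` with `y i = 1`, and two of them are adjacent iff they are adjacent
in `G` and the corresponding edge has `x`-value one. -/
def inducedF (G : SimpleGraph V) (x : Sym2 V → ℝ) (y : V → ℝ) :
    SimpleGraph {i : V // y i = 1} where
  Adj p q := G.Adj p.1 q.1 ∧ x s(p.1, q.1) = 1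
  symm := by
    constructor
    intro p q h
    exact ⟨h.1.symm, by rw [Sym2.eq_swap]; exact h.2⟩
  loopless := by
    constructor
    intro p h
    exact G.irrefl h.1

lemma sumx_eq_card (G : SimpleGraph V) (x : Sym2 V → ℝ)
    (hx : ∀ e ∈ G.edgeSet, x e = 0 ∨ x e = 1)
    (A : Finset (Sym2 V)) (hA : A ⊆ G.edgeFinset) :
    (∑ e ∈ A, x e) = ((A.filter (fun e => x e = 1)).card : ℝ) := by
  rw [Finset.card_filter]
  push_cast
  refine Finset.sum_congr rfl fun e he => ?_
  rcases hx e (by simpa [SimpleGraph.mem_edgeFinset] using hA he) with h | h <;> simp [h]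

lemma xnonneg (G : SimpleGraph V) (x : Sym2 V → ℝ)
    (hx : ∀ e ∈ G.edgeSet, x e = 0 ∨ x e = 1) :
    ∀ e ∈ G.edgeFinset, 0 ≤ x e := by
  intro e he
  rcases hx e (by simpa [SimpleGraph.mem_edgeFinset] using he) with h | h <;> simp [h]

lemma y_eq_one_of_x_eq_one (G : SimpleGraph V) (x : Sym2 V → ℝ) (y : V → ℝ)
    (hx : ∀ e ∈ G.edgeSet, x e = 0 ∨ x e = 1)
    (hy : ∀ i : V, y i = 0 ∨ y i = 1)
    (h2 : ∀ S : Finset V, ∀ i ∈ S,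
      y i ≤ (∑ j ∈ S, y j) -
        (∑ e ∈ G.edgeFinset.filter (fun e => ∀ v ∈ e, v ∈ S), x e))
    {i j : V} (hadj : G.Adj i j) (hx1 : x s(i, j) = 1) : y j = 1 := by
  have hne : i ≠ j := hadj.ne
  have h2' := h2 {i, j} i (by simp)
  rw [Finset.sum_pair hne] at h2'
  have hmem : s(i, j) ∈ G.edgeFinset.filter (fun e => ∀ v ∈ e, v ∈ ({i, j} : Finset V)) := by
    simp [SimpleGraph.mem_edgeFinset, hadj, Sym2.mem_iff]
  have hle : x s(i, j) ≤ ∑ e ∈ G.edgeFinset.filter (fun e => ∀ v ∈ e, v ∈ ({i, j} : Finset V)), x e :=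
    Finset.single_le_sum (fun e he => xnonneg G x hx e (Finset.mem_of_mem_filter e he)) hmem
  have h1j : 1 ≤ y j := by rw [hx1] at hle; linarith
  rcases hy j with h | h
  · exfalso; rw [h] at h1j; linarith
  · exact h

lemma key_subtour (G : SimpleGraph V) (x : Sym2 V → ℝ) (y : V → ℝ)
    (hx : ∀ e ∈ G.edgeSet, x e = 0 ∨ x e = 1)
    (h2 : ∀ S : Finset V, ∀ i ∈ S,
      y i ≤ (∑ j ∈ S, y j) -
        (∑ e ∈ G.edgeFinset.filter (fun e => ∀ v ∈ e, v ∈ S), x e))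
    (s : Finset V) (hys : ∀ j ∈ s, y j = 1) {i : V} (hi : i ∈ s) :
    (G.edgeFinset.filter (fun e => (∀ v ∈ e, v ∈ s) ∧ x e = 1)).card + 1 ≤ s.card := by
  have h2' := h2 s i hi
  have hsum : (∑ j ∈ s, y j) = (s.card : ℝ) := by
    rw [Finset.sum_congr rfl hys]; simp
  have hxsum := sumx_eq_card G x hx (G.edgeFinset.filter (fun e => ∀ v ∈ e, v ∈ s))
    (Finset.filter_subset _ _)
  rw [Finset.filter_filter] at hxsum
  rw [hsum, hxsum, hys i hi] at h2'
  have : ((G.edgeFinset.filter (fun e => (∀ v ∈ e, v ∈ s) ∧ x e = 1)).card : ℝ) + 1 ≤ (s.card : ℝ) := by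
    linarith
  exact_mod_cast this

lemma card_induce_edges {W : Type} [Fintype W] [DecidableEq W] (F : SimpleGraph W) (s : Set W)
    [DecidablePred fun e : Sym2 W => ∀ w ∈ e, w ∈ s] [Fintype (F.induce s).edgeSet] :
    (F.induce s).edgeFinset.card = (F.edgeFinset.filter (fun e => ∀ w ∈ e, w ∈ s)).card := by
  refine Finset.card_bij (fun e _ => Sym2.map Subtype.val e) ?_ ?_ ?_
  · intro e he
    induction e using Sym2.ind with
    | _ a b =>
      rw [SimpleGraph.mem_edgeFinset] at he
      rw [Sym2.map_pair_eq]
      rw [SimpleGraph.mem_edgeSet] at he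
      simp only [SimpleGraph.comap_adj, Function.Embedding.coe_subtype] at he
      refine Finset.mem_filter.mpr ⟨?_, ?_⟩
      · simpa [SimpleGraph.mem_edgeFinset] using he
      · intro w hw
        rcases Sym2.mem_iff.mp hw with rfl | rfl
        · exact a.2
        · exact b.2
  · intro e1 _ e2 _ h
    exact Sym2.map.injective Subtype.val_injective h
  · intro e he
    rw [Finset.mem_filter] at he
    obtain ⟨he1, he2⟩ := he
    induction e using Sym2.ind with
    | _ a b =>
      have ha : a ∈ s := he2 a (by simp)
      have hb : b ∈ s := he2 b (by simp)
      refine ⟨s(⟨a, ha⟩, ⟨b, hb⟩), ?_, by rw [Sym2.map_pair_eq]⟩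
      rw [SimpleGraph.mem_edgeFinset, SimpleGraph.mem_edgeSet]
      simp only [SimpleGraph.comap_adj, Function.Embedding.coe_subtype]
      simpa [SimpleGraph.mem_edgeFinset] using he1

lemma card_inducedF_edges (G : SimpleGraph V) (x : Sym2 V → ℝ) (y : V → ℝ)
    (hx : ∀ e ∈ G.edgeSet, x e = 0 ∨ x e = 1)
    (hy : ∀ i : V, y i = 0 ∨ y i = 1)
    (h2 : ∀ S : Finset V, ∀ i ∈ S,
      y i ≤ (∑ j ∈ S, y j) -
        (∑ e ∈ G.edgeFinset.filter (fun e => ∀ v ∈ e, v ∈ S), x e)) :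
    (inducedF G x y).edgeFinset.card = (G.edgeFinset.filter (fun e => x e = 1)).card := by
  refine Finset.card_bij (fun e _ => Sym2.map Subtype.val e) ?_ ?_ ?_
  · intro e he
    induction e using Sym2.ind with
    | _ a b =>
      rw [SimpleGraph.mem_edgeFinset, SimpleGraph.mem_edgeSet] at he
      rw [Sym2.map_pair_eq]
      refine Finset.mem_filter.mpr ⟨?_, he.2⟩
      rw [SimpleGraph.mem_edgeFinset, SimpleGraph.mem_edgeSet]
      exact he.1
  · intro e1 _ e2 _ h
    exact Sym2.map.injective Subtype.val_injective h
  · intro e he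
    rw [Finset.mem_filter] at he
    obtain ⟨he1, he2⟩ := he
    induction e using Sym2.ind with
    | _ i j =>
      rw [SimpleGraph.mem_edgeFinset, SimpleGraph.mem_edgeSet] at he1
      have hyj : y j = 1 := y_eq_one_of_x_eq_one G x y hx hy h2 he1 he2
      have hyi : y i = 1 := y_eq_one_of_x_eq_one G x y hx hy h2 he1.symm
        (by rwa [Sym2.eq_swap] at he2)
      refine ⟨s(⟨i, hyi⟩, ⟨j, hyj⟩), ?_, by rw [Sym2.map_pair_eq]⟩
      rw [SimpleGraph.mem_edgeFinset, SimpleGraph.mem_edgeSet]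
      exact ⟨he1, he2⟩

lemma inducedF_isAcyclic (G : SimpleGraph V) (x : Sym2 V → ℝ) (y : V → ℝ)
    (hx : ∀ e ∈ G.edgeSet, x e = 0 ∨ x e = 1)
    (h2 : ∀ S : Finset V, ∀ i ∈ S,
      y i ≤ (∑ j ∈ S, y j) -
        (∑ e ∈ G.edgeFinset.filter (fun e => ∀ v ∈ e, v ∈ S), x e)) :
    (inducedF G x y).IsAcyclic := by
  intro v p hp
  -- the support as a Finset of V
  set SS : Finset V := p.support.toFinset.image Subtype.val with hSS
  have hcard_supp : p.support.toFinset.card = p.length := by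
    cases p with
    | nil => exact absurd rfl hp.ne_nil
    | cons h q =>
      have hnd : q.support.Nodup := by simpa using hp.support_nodup
      have hv : v ∈ q.support := q.end_mem_support
      rw [SimpleGraph.Walk.support_cons]
      rw [List.toFinset_cons, Finset.insert_eq_self.mpr (List.mem_toFinset.mpr hv)]
      rw [List.toFinset_card_of_nodup hnd, SimpleGraph.Walk.length_support] at *
      simp [SimpleGraph.Walk.length_cons]
  have hcardSS : SS.card = p.length := by
    rw [hSS, Finset.card_image_of_injective _ Subtype.val_injective, hcard_supp]
  have hySS : ∀ j ∈ SS, y j = 1 := by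
    intro j hj
    rw [hSS, Finset.mem_image] at hj
    obtain ⟨a, _, rfl⟩ := hj
    exact a.2
  have hvSS : (v : V) ∈ SS := by
    rw [hSS, Finset.mem_image]
    exact ⟨v, List.mem_toFinset.mpr p.start_mem_support, rfl⟩
  -- edges of the cycle give many x-one edges inside SS
  have hedges_nodup : p.edges.Nodup := hp.edges_nodup
  set L : List (Sym2 V) := p.edges.map (Sym2.map Subtype.val) with hL
  have hLnd : L.Nodup := hedges_nodup.map (Sym2.map.injective Subtype.val_injective)
  have hLsub : L.toFinset ⊆ G.edgeFinset.filter (fun e => (∀ w ∈ e, w ∈ SS) ∧ x e = 1) := by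
    intro ee hee
    rw [List.mem_toFinset, hL, List.mem_map] at hee
    obtain ⟨e, heL, rfl⟩ := hee
    have hedge := p.edges_subset_edgeSet heL
    induction e using Sym2.ind with
    | _ a b =>
      rw [SimpleGraph.mem_edgeSet] at hedge
      obtain ⟨hadj, hx1⟩ := hedge
      rw [Sym2.map_pair_eq]
      refine Finset.mem_filter.mpr ⟨?_, ?_, hx1⟩
      · rw [SimpleGraph.mem_edgeFinset, SimpleGraph.mem_edgeSet]; exact hadj
      · intro w hw
        rcases Sym2.mem_iff.mp hw with rfl | rfl
        · exact Finset.mem_image.mpr ⟨a, List.mem_toFinset.mpr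
            (SimpleGraph.Walk.fst_mem_support_of_mem_edges p heL), rfl⟩
        · exact Finset.mem_image.mpr ⟨b, List.mem_toFinset.mpr
            (SimpleGraph.Walk.snd_mem_support_of_mem_edges p heL), rfl⟩
  have hLcard : L.toFinset.card = p.length := by
    rw [List.toFinset_card_of_nodup hLnd, hL, List.length_map, SimpleGraph.Walk.length_edges]
  have hEC := key_subtour G x y hx h2 SS hySS hvSS
  have hge : p.length ≤ (G.edgeFinset.filter (fun e => (∀ w ∈ e, w ∈ SS) ∧ x e = 1)).card := by
    rw [← hLcard]
    exact Finset.card_le_card hLsub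
  omega

lemma connected_induce_supp {W : Type} [Fintype W] [DecidableEq W] (F : SimpleGraph W)
    (c : F.ConnectedComponent) : (F.induce c.supp).Connected := by
  obtain ⟨u, hu⟩ := c.exists_rep
  have hu' : u ∈ c.supp := by rwa [SimpleGraph.ConnectedComponent.mem_supp_iff]
  refine SimpleGraph.induce_connected_of_patches u hu' ?_
  intro v hv
  rw [SimpleGraph.ConnectedComponent.mem_supp_iff] at hv hu'
  have hreach : F.Reachable u v := SimpleGraph.ConnectedComponent.exact (hu'.trans hv.symm)
  obtain ⟨p⟩ := hreach
  refine ⟨{w | w ∈ p.support}, ?_, p.start_mem_support, p.end_mem_support, ?_⟩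
  · intro w hw
    rw [SimpleGraph.ConnectedComponent.mem_supp_iff, ← hu']
    exact (SimpleGraph.ConnectedComponent.sound (p.takeUntil w hw).reachable).symm
  · exact (p.connected_induce_support).preconnected _ _

lemma isAcyclic_induce {W : Type} [Fintype W] [DecidableEq W] {F : SimpleGraph W}
    (hac : F.IsAcyclic) (s : Set W) : (F.induce s).IsAcyclic := by
  intro v q hq
  have hinj : Function.Injective ((SimpleGraph.Embedding.induce (G := F) s).toHom) :=
    (SimpleGraph.Embedding.induce (G := F) s).injective
  exact hac _ ((SimpleGraph.Walk.map_isCycle_iff_of_injective hinj).mpr hq)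

lemma card_eq_edges_add_components {W : Type} [Fintype W] [DecidableEq W]
    (F : SimpleGraph W) (hac : F.IsAcyclic) :
    Fintype.card W = F.edgeFinset.card + Fintype.card F.ConnectedComponent := by
  classical
  have htree : ∀ c : F.ConnectedComponent,
      (F.induce c.supp).edgeFinset.card + 1 = Fintype.card c.supp := by
    intro c
    exact SimpleGraph.IsTree.card_edgeFinset ⟨connected_induce_supp F c, isAcyclic_induce hac _⟩
  -- vertex partition
  have hv : Fintype.card W =
      ∑ c : F.ConnectedComponent, Fintype.card c.supp := by
    rw [← Finset.card_univ]
    rw [Finset.card_eq_sum_card_fiberwise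
      (f := fun v => F.connectedComponentMk v) (t := Finset.univ)
      (fun v _ => Finset.mem_univ _)]
    refine Finset.sum_congr rfl fun c _ => ?_
    rw [← Set.toFinset_card]
    congr 1
    ext w
    simp [SimpleGraph.ConnectedComponent.mem_supp_iff]
  -- edge partition
  have hmkout : ∀ e : Sym2 W, Sym2.mk e.out.1 e.out.2 = e := fun e => Quot.out_eq e
  have he : F.edgeFinset.card =
      ∑ c : F.ConnectedComponent,
        (F.edgeFinset.filter (fun e => ∀ w ∈ e, w ∈ c.supp)).card := by
    rw [Finset.card_eq_sum_card_fiberwise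
      (f := fun e => F.connectedComponentMk e.out.1) (t := Finset.univ)
      (fun e _ => Finset.mem_univ _)]
    refine Finset.sum_congr rfl fun c _ => ?_
    congr 1
    refine Finset.filter_congr fun e he => ?_
    rw [SimpleGraph.mem_edgeFinset] at he
    have hadj : F.Adj e.out.1 e.out.2 := by
      have hse : s(e.out.1, e.out.2) = e := by
        conv_rhs => rw [← hmkout e]
      rw [← SimpleGraph.mem_edgeSet, hse]; exact he
    constructor
    · intro h w hw
      rw [← hmkout e] at hw
      rcases Sym2.mem_iff.mp hw with rfl | rfl
      · exact SimpleGraph.ConnectedComponent.mem_supp_iff _ _ |>.mpr h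
      · rw [SimpleGraph.ConnectedComponent.mem_supp_iff, ← h]
        exact (SimpleGraph.ConnectedComponent.sound hadj.reachable).symm
    · intro h
      exact SimpleGraph.ConnectedComponent.mem_supp_iff _ _ |>.mp (h e.out.1 (Sym2.out_fst_mem e))
  have hfinal : ∀ c : F.ConnectedComponent,
      Fintype.card c.supp =
        (F.edgeFinset.filter (fun e => ∀ w ∈ e, w ∈ c.supp)).card + 1 := by
    intro c
    have h1 := htree c
    have h2 := card_induce_edges F (c.supp)
    omega
  calc Fintype.card W = ∑ c : F.ConnectedComponent, Fintype.card c.supp := hv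
    _ = ∑ c : F.ConnectedComponent,
          ((F.edgeFinset.filter (fun e => ∀ w ∈ e, w ∈ c.supp)).card + 1) :=
        Finset.sum_congr rfl fun c _ => hfinal c
    _ = (∑ c : F.ConnectedComponent,
          (F.edgeFinset.filter (fun e => ∀ w ∈ e, w ∈ c.supp)).card)
          + Fintype.card F.ConnectedComponent := by
        rw [Finset.sum_add_distrib, Finset.sum_const, smul_eq_mul, mul_one, Finset.card_univ]
    _ = F.edgeFinset.card + Fintype.card F.ConnectedComponent := by rw [← he]


/-- For a feasible integer solution of IPet, the induced graph
`F_{x,y}` is acyclic and has exactly `R` connected components. -/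
theorem inducedF_acyclic_and_card_components (G : SimpleGraph V) {K : ℕ}
    (T : Fin K → Finset V) (r : Fin K → V)
    (hroot : ∀ k, r k ∈ T k)
    (hdisj : ∀ k l : Fin K, k ≠ l → Disjoint (T k) (T l))
    (x : Sym2 V → ℝ) (y : V → ℝ) (w : Fin K → Fin K → ℝ)
    (z : V → Fin K → ℝ) (a : Fin K → ℝ) (R : ℕ)
    (hfeas : IPetFeasible G T r x y w z a R) :
    (inducedF G x y).IsAcyclic ∧
      Nat.card ((inducedF G x y).ConnectedComponent) = R := by
  obtain ⟨hx, hy, -, -, -, -, h1, h2, -, -, -, -, -, -⟩ := hfeas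
  have hacy := inducedF_isAcyclic G x y hx h2
  refine ⟨hacy, ?_⟩
  have hn : (∑ i : V, y i) = (Fintype.card {i : V // y i = 1} : ℝ) := by
    rw [Fintype.card_subtype, Finset.card_filter]
    push_cast
    refine Finset.sum_congr rfl fun i _ => ?_
    rcases hy i with h | h <;> simp [h]
  have hm := sumx_eq_card G x hx G.edgeFinset (subset_refl _)
  have hNR : Fintype.card {i : V // y i = 1}
      = (G.edgeFinset.filter (fun e => x e = 1)).card + R := by
    have hr : (Fintype.card {i : V // y i = 1} : ℝ)
        = ((G.edgeFinset.filter (fun e => x e = 1)).card : ℝ) + R := by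
      rw [← hn, ← hm]; linarith [h1]
    exact_mod_cast hr
  have hcc := card_eq_edges_add_components (inducedF G x y) hacy
  have hE := card_inducedF_edges G x y hx hy h2
  rw [Nat.card_eq_fintype_card]
  omega
end
end

section
/- Let (x*,y*,a*,w*,z*,R*) be a feasible integer solution to the tree-based formulation IPet and let P be a path in the induced graph F_{x*,y*}. If z*_{ik} = 1 for some node i of P and some k ∈ [K], then z*_{jk} = 1 for every node j of P. -/
open Finset
open scoped Classical

noncomputable section

variable {V : Type} [Fintype V] [DecidableEq V]

/-- Along any path of the induced graph `F_{x,y}` of a feasible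
integer IPet solution, the value `z · k` is constantly one as soon as it is one
at some node of the path. -/
theorem z_constant_on_paths (G : SimpleGraph V) {K : ℕ}
    (T : Fin K → Finset V) (r : Fin K → V)
    (hroot : ∀ k, r k ∈ T k)
    (hdisj : ∀ k l : Fin K, k ≠ l → Disjoint (T k) (T l))
    (x : Sym2 V → ℝ) (y : V → ℝ) (w : Fin K → Fin K → ℝ)
    (z : V → Fin K → ℝ) (a : Fin K → ℝ) (R : ℕ)
    (hfeas : IPetFeasible G T r x y w z a R) :
    ∀ (u v : {i : V // y i = 1}) (p : (inducedF G x y).Walk u v), p.IsPath →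
      ∀ k : Fin K, (∃ i ∈ p.support, z i.1 k = 1) →
        ∀ j ∈ p.support, z j.1 k = 1 := by
  obtain ⟨-, -, -, -, -, -, -, -, -, -, -, h6, -, -⟩ := hfeas
  have hadj : ∀ (p q : {i : V // y i = 1}), (inducedF G x y).Adj p q →
      ∀ k : Fin K, z p.1 k = z q.1 k := by
    intro p q hpq k
    obtain ⟨hG, hx⟩ := hpq
    obtain ⟨h1, h2⟩ := h6 p.1 q.1 hG k
    rw [hx] at h1 h2
    linarith
  have hconst : ∀ (u v : {i : V // y i = 1}) (p : (inducedF G x y).Walk u v)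
      (k : Fin K), ∀ j ∈ p.support, z j.1 k = z u.1 k := by
    intro u v p k
    induction p with
    | nil => intro j hj; simp at hj; rw [hj]
    | cons h q ih =>
      intro j hj
      rw [SimpleGraph.Walk.support_cons] at hj
      rcases List.mem_cons.mp hj with rfl | hj
      · rfl
      · rw [ih j hj, hadj _ _ h k]
  intro u v p _ k ⟨i, hi, hzi⟩ j hj
  rw [hconst u v p k j hj, ← hconst u v p k i hi, hzi]
end
end

section
/- Let (x*,y*,a*,w*,z*,R*) be a feasible integer solution to the tree-based formulation IPet and let F be a connected component of the induced graph F_{x*,y*}. Then there is exactly one index k ∈ [K] such that the root r^k lies in F and r^k is active (i.e. a*_k = 1). -/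
open Finset
open scoped Classical

noncomputable section

variable {V : Type} [Fintype V] [DecidableEq V]

lemma sum_eq_card_filter' {α : Type*} (s : Finset α) (f : α → ℝ)
    (h : ∀ i ∈ s, f i = 0 ∨ f i = 1) :
    ∑ i ∈ s, f i = ((s.filter (fun i => f i = 1)).card : ℝ) := by
  rw [← Finset.sum_filter_add_sum_filter_not s (fun i => f i = 1)]
  have h1 : ∑ i ∈ s.filter (fun i => f i = 1), f i
      = ((s.filter (fun i => f i = 1)).card : ℝ) := by
    rw [Finset.sum_congr rfl (fun i hi => (Finset.mem_filter.mp hi).2)]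
    simp
  have h2 : ∑ i ∈ s.filter (fun i => ¬ f i = 1), f i = 0 :=
    Finset.sum_eq_zero fun i hi => by
      rcases h i (Finset.mem_filter.mp hi).1 with h0 | h1
      · exact h0
      · exact absurd h1 (Finset.mem_filter.mp hi).2
  rw [h1, h2, add_zero]

/-- Every connected component of the induced graph `F_{x,y}` of
a feasible integer IPet solution contains exactly one active root, i.e. exactly
one index `k` with `a k = 1` and `r k` lying in the component. -/
theorem exists_unique_active_root (G : SimpleGraph V) {K : ℕ}
    (T : Fin K → Finset V) (r : Fin K → V)
    (hroot : ∀ k, r k ∈ T k)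
    (hdisj : ∀ k l : Fin K, k ≠ l → Disjoint (T k) (T l))
    (x : Sym2 V → ℝ) (y : V → ℝ) (w : Fin K → Fin K → ℝ)
    (z : V → Fin K → ℝ) (a : Fin K → ℝ) (R : ℕ)
    (hfeas : IPetFeasible G T r x y w z a R) :
    ∀ C : (inducedF G x y).ConnectedComponent,
      ∃! k : Fin K, a k = 1 ∧
        ∃ h : y (r k) = 1, (inducedF G x y).connectedComponentMk ⟨r k, h⟩ = C := by
  classical
  obtain ⟨hxI, hyI, hwI, hzI, haI, ⟨hR1, hRK⟩, h1, h2, h3, h4, h5, h6, h7, h8⟩ := hfeas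
  set H := inducedF G x y with hHdef
  haveI : Fintype H.ConnectedComponent := Fintype.ofFinite _
  -- z is constant on components
  have hzedge : ∀ p q : {i : V // y i = 1}, H.Adj p q → ∀ k, z p.1 k = z q.1 k := by
    intro p q hpq k
    obtain ⟨hadj, hx⟩ := hpq
    obtain ⟨h6a, h6b⟩ := h6 p.1 q.1 hadj k
    exact le_antisymm (by linarith) (by linarith)
  have hzreach : ∀ p q : {i : V // y i = 1}, H.Reachable p q → ∀ k, z p.1 k = z q.1 k := by
    intro p q hpq k
    obtain ⟨wlk⟩ := hpq
    induction wlk with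
    | nil => rfl
    | cons h _ ih => exact (hzedge _ _ h k).trans ih
  -- edges with x = 1 have both endpoints with y = 1
  have hfilter_pair : ∀ i j : V, G.Adj i j →
      G.edgeFinset.filter (fun e => ∀ v ∈ e, v ∈ ({i, j} : Finset V)) = {s(i, j)} := by
    intro i j hij
    ext e
    simp only [Finset.mem_filter, SimpleGraph.mem_edgeFinset, Finset.mem_singleton]
    constructor
    · rintro ⟨he, hv⟩
      induction e with
      | _ u v =>
        have hu : u ∈ ({i, j} : Finset V) := hv u (by simp)
        have hv' : v ∈ ({i, j} : Finset V) := hv v (by simp)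
        have huv : u ≠ v := (G.mem_edgeSet.mp he).ne
        simp only [Finset.mem_insert, Finset.mem_singleton] at hu hv'
        rcases hu with rfl | rfl <;> rcases hv' with rfl | rfl
        · exact absurd rfl huv
        · rfl
        · exact Sym2.eq_swap
        · exact absurd rfl huv
    · rintro rfl
      refine ⟨G.mem_edgeSet.mpr hij, fun v hv => ?_⟩
      rcases Sym2.mem_iff.mp hv with rfl | rfl <;> simp
  have hy_of_x : ∀ i j : V, G.Adj i j → x s(i, j) = 1 → y i = 1 ∧ y j = 1 := by
    intro i j hij hx
    have hne := hij.ne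
    have hSi := h2 {i, j} i (by simp)
    have hSj := h2 {i, j} j (by simp)
    rw [hfilter_pair i j hij, Finset.sum_singleton, Finset.sum_pair hne, hx] at hSi hSj
    constructor
    · rcases hyI i with h0 | h1
      · rw [h0] at hSj; rcases hyI j with h0' | h1' <;> linarith
      · exact h1
    · rcases hyI j with h0 | h1
      · rw [h0] at hSi; rcases hyI i with h0' | h1' <;> linarith
      · exact h1
  have hxnn : ∀ e ∈ G.edgeFinset, 0 ≤ x e := by
    intro e he
    rcases hxI e (SimpleGraph.mem_edgeFinset.mp he) with h0 | h0 <;> linarith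
  -- component of an edge
  set f : Sym2 {i : V // y i = 1} → H.ConnectedComponent :=
    fun e => H.connectedComponentMk (Quot.out e).1 with hfdef
  have hf_edge : ∀ p q : {i : V // y i = 1}, H.Adj p q →
      f s(p, q) = H.connectedComponentMk p := by
    intro p q hpq
    have hmem : (Quot.out s(p, q)).1 ∈ s(p, q) := Sym2.out_fst_mem _
    rcases Sym2.mem_iff.mp hmem with he | he
    · rw [hfdef]; simp only []; rw [he]
    · rw [hfdef]; simp only []; rw [he]
      exact SimpleGraph.ConnectedComponent.sound hpq.symm.reachable
  -- per-component inequality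
  have hcomp_ineq : ∀ C : H.ConnectedComponent,
      (1 : ℝ) ≤ ((Finset.univ.filter
          (fun p : {i : V // y i = 1} => H.connectedComponentMk p = C)).card : ℝ)
        - ((H.edgeFinset.filter (fun e => f e = C)).card : ℝ) := by
    intro C
    set VC := Finset.univ.filter
      (fun p : {i : V // y i = 1} => H.connectedComponentMk p = C) with hVCdef
    set SC : Finset V := VC.image Subtype.val with hSCdef
    have hCout : C.out ∈ VC := by
      rw [hVCdef]; exact Finset.mem_filter.mpr ⟨Finset.mem_univ _, C.out_eq⟩
    have hi0 : C.out.1 ∈ SC := Finset.mem_image_of_mem _ hCout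
    have h2' := h2 SC C.out.1 hi0
    have hyi0 : y C.out.1 = 1 := C.out.2
    have hvalinj : ∀ p ∈ VC, ∀ q ∈ VC, (p : V) = q → p = q :=
      fun p _ q _ h => Subtype.ext h
    have hsy : ∑ j ∈ SC, y j = (VC.card : ℝ) := by
      rw [hSCdef, Finset.sum_image hvalinj]
      rw [Finset.sum_congr rfl (fun p _ => p.2)]
      simp
    -- the edges of the component inject into the G-edges inside SC
    have hsub : (H.edgeFinset.filter (fun e => f e = C)).image (Sym2.map Subtype.val)
        ⊆ G.edgeFinset.filter (fun e => ∀ v ∈ e, v ∈ SC) := by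
      intro e' he'
      obtain ⟨e, he, rfl⟩ := Finset.mem_image.mp he'
      revert he
      refine Sym2.inductionOn e ?_
      intro p q he
      obtain ⟨heE, hfC⟩ := Finset.mem_filter.mp he
      have hadj : H.Adj p q := H.mem_edgeSet.mp (SimpleGraph.mem_edgeFinset.mp heE)
      have hcp : H.connectedComponentMk p = C := by
        rw [← hf_edge p q hadj]; exact hfC
      have hcq : H.connectedComponentMk q = C := by
        rw [← hcp]
        exact SimpleGraph.ConnectedComponent.sound hadj.symm.reachable
      have hpVC : p ∈ VC := by rw [hVCdef]; simp [hcp]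
      have hqVC : q ∈ VC := by rw [hVCdef]; simp [hcq]
      refine Finset.mem_filter.mpr ⟨?_, ?_⟩
      · exact SimpleGraph.mem_edgeFinset.mpr (G.mem_edgeSet.mpr hadj.1)
      · intro v hv
        rw [Sym2.map_pair_eq] at hv
        rcases Sym2.mem_iff.mp hv with rfl | rfl
        · exact Finset.mem_image_of_mem _ hpVC
        · exact Finset.mem_image_of_mem _ hqVC
    have hxval : ∀ e' ∈ (H.edgeFinset.filter (fun e => f e = C)).image (Sym2.map Subtype.val),
        x e' = 1 := by
      intro e' he'
      obtain ⟨e, he, rfl⟩ := Finset.mem_image.mp he'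
      revert he
      refine Sym2.inductionOn e ?_
      intro p q he
      have hadj : H.Adj p q :=
        H.mem_edgeSet.mp (SimpleGraph.mem_edgeFinset.mp (Finset.mem_filter.mp he).1)
      rw [Sym2.map_pair_eq]
      exact hadj.2
    have hcard_img : ((H.edgeFinset.filter (fun e => f e = C)).image
        (Sym2.map Subtype.val)).card = (H.edgeFinset.filter (fun e => f e = C)).card :=
      Finset.card_image_of_injective _ (Sym2.map.injective Subtype.val_injective)
    have hxsum_ge : ((H.edgeFinset.filter (fun e => f e = C)).card : ℝ)
        ≤ ∑ e ∈ G.edgeFinset.filter (fun e => ∀ v ∈ e, v ∈ SC), x e := by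
      have h1' : ∑ e' ∈ (H.edgeFinset.filter (fun e => f e = C)).image (Sym2.map Subtype.val),
          x e' = ((H.edgeFinset.filter (fun e => f e = C)).card : ℝ) := by
        rw [Finset.sum_congr rfl hxval]
        simp [hcard_img]
      rw [← h1']
      refine Finset.sum_le_sum_of_subset_of_nonneg hsub ?_
      intro e he _
      exact hxnn e (Finset.mem_filter.mp he).1
    linarith
  -- global counting
  have hVcount : Fintype.card {i : V // y i = 1}
      = ∑ C : H.ConnectedComponent, (Finset.univ.filter
          (fun p : {i : V // y i = 1} => H.connectedComponentMk p = C)).card := by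
    rw [← Finset.card_univ]
    exact Finset.card_eq_sum_card_fiberwise (fun p _ => Finset.mem_univ _)
  have hEcount : H.edgeFinset.card
      = ∑ C : H.ConnectedComponent, (H.edgeFinset.filter (fun e => f e = C)).card :=
    Finset.card_eq_sum_card_fiberwise (fun e _ => Finset.mem_univ _)
  have hsumy : ∑ i : V, y i = (Fintype.card {i : V // y i = 1} : ℝ) := by
    rw [sum_eq_card_filter' Finset.univ y (fun i _ => hyI i), Fintype.card_subtype]
  have hsumx : ∑ e ∈ G.edgeFinset, x e = (H.edgeFinset.card : ℝ) := by
    rw [sum_eq_card_filter' G.edgeFinset x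
      (fun e he => hxI e (SimpleGraph.mem_edgeFinset.mp he))]
    congr 1
    refine (Finset.card_bij (fun e _ => Sym2.map Subtype.val e) ?_ ?_ ?_).symm
    · intro e he
      revert he
      refine Sym2.inductionOn e ?_
      intro p q he
      have hadj : H.Adj p q := H.mem_edgeSet.mp (SimpleGraph.mem_edgeFinset.mp he)
      refine Finset.mem_filter.mpr ⟨?_, ?_⟩
      · exact SimpleGraph.mem_edgeFinset.mpr (G.mem_edgeSet.mpr hadj.1)
      · simp only [Sym2.map_pair_eq]; exact hadj.2
    · intro e₁ h₁ e₂ h₂ h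
      exact Sym2.map.injective Subtype.val_injective h
    · intro b hb
      obtain ⟨hbE, hbx⟩ := Finset.mem_filter.mp hb
      revert hbE hbx
      refine Sym2.inductionOn b ?_
      intro i j hbE hbx
      have hadj : G.Adj i j := G.mem_edgeSet.mp (SimpleGraph.mem_edgeFinset.mp hbE)
      obtain ⟨hyi, hyj⟩ := hy_of_x i j hadj hbx
      refine ⟨s(⟨i, hyi⟩, ⟨j, hyj⟩), ?_, ?_⟩
      · exact SimpleGraph.mem_edgeFinset.mpr (H.mem_edgeSet.mpr ⟨hadj, hbx⟩)
      · simp [Sym2.map_pair_eq]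
  have hcompR : Fintype.card H.ConnectedComponent ≤ R := by
    have hsum : ∑ C : H.ConnectedComponent,
        (((Finset.univ.filter (fun p : {i : V // y i = 1} =>
          H.connectedComponentMk p = C)).card : ℝ)
          - ((H.edgeFinset.filter (fun e => f e = C)).card : ℝ)) = (R : ℝ) := by
      rw [Finset.sum_sub_distrib]
      rw [← Nat.cast_sum, ← Nat.cast_sum, ← hVcount, ← hEcount]
      rw [← hsumy, ← hsumx]
      exact h1
    have hge : (Fintype.card H.ConnectedComponent : ℝ) ≤ (R : ℝ) := by
      calc (Fintype.card H.ConnectedComponent : ℝ)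
          = ∑ _C : H.ConnectedComponent, (1 : ℝ) := by simp
        _ ≤ _ := Finset.sum_le_sum (fun C _ => hcomp_ineq C)
        _ = (R : ℝ) := hsum
    exact_mod_cast hge
  -- the active roots
  have hyr : ∀ k, y (r k) = 1 := fun k => (h8 k (r k) (hroot k)).2
  have hzr : ∀ k, z (r k) k = 1 := fun k => (h8 k (r k) (hroot k)).1
  set A := Finset.univ.filter (fun k : Fin K => a k = 1) with hAdef
  have hAcard : A.card = R := by
    have := sum_eq_card_filter' Finset.univ a (fun k _ => haI k)
    rw [h3] at this
    exact_mod_cast this.symm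
  set ψ : Fin K → H.ConnectedComponent :=
    fun k => H.connectedComponentMk ⟨r k, hyr k⟩ with hψdef
  have hstep : ∀ p q : {i : V // y i = 1}, p ≠ q → H.Reachable p q →
      ∃ m, H.Adj p m ∧ H.Reachable m q := by
    intro p q hne hr
    obtain ⟨wlk⟩ := hr
    cases wlk with
    | nil => exact absurd rfl hne
    | cons hadj w' => exact ⟨_, hadj, w'.reachable⟩
  have haux : ∀ k l : Fin K, k < l → a k = 1 → ψ k = ψ l → False := by
    intro k l hkl hak hψeq
    have hne : r k ≠ r l := by
      intro h
      exact Finset.disjoint_left.mp (hdisj k l hkl.ne) (hroot k) (h ▸ hroot l)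
    have hne' : (⟨r k, hyr k⟩ : {i : V // y i = 1}) ≠ ⟨r l, hyr l⟩ :=
      fun h => hne (congrArg Subtype.val h)
    have hreach := SimpleGraph.ConnectedComponent.exact hψeq
    obtain ⟨m, hadj, hmr⟩ := hstep _ _ hne' hreach
    have hzk : z (r k) k = 1 := hzr k
    have hzm : z m.1 l = 1 := by
      rw [hzreach m ⟨r l, hyr l⟩ hmr l]
      exact hzr l
    have h5' := (h5 (r k) m.1 hadj.1 k l hkl).1
    have hx1 : x s(r k, m.1) = 1 := hadj.2
    have hw1 : 1 ≤ w k l := by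
      rw [hx1, hzk, hzm] at h5'
      linarith
    have h4' := h4 k l hkl
    linarith
  have hinj : Set.InjOn ψ A := by
    intro k hk l hl heq
    by_contra hne
    rcases Ne.lt_or_gt hne with h | h
    · exact haux k l h (Finset.mem_filter.mp hk).2 heq
    · exact haux l k h (Finset.mem_filter.mp hl).2 heq.symm
  have himage : A.image ψ = Finset.univ := by
    apply Finset.eq_univ_of_card
    rw [Finset.card_image_of_injOn hinj, hAcard]
    have hle1 : (A.image ψ).card ≤ Fintype.card H.ConnectedComponent :=
      Finset.card_le_univ _
    rw [Finset.card_image_of_injOn hinj, hAcard] at hle1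
    omega
  intro C
  have hC : C ∈ A.image ψ := himage ▸ Finset.mem_univ C
  obtain ⟨k, hkA, hk⟩ := Finset.mem_image.mp hC
  refine ⟨k, ⟨(Finset.mem_filter.mp hkA).2, hyr k, hk⟩, ?_⟩
  rintro l ⟨hal, hl, hlC⟩
  have hlA : l ∈ A := Finset.mem_filter.mpr ⟨Finset.mem_univ l, hal⟩
  have hψl : ψ l = C := hlC
  exact hinj hlA hkA (hψl.trans hk.symm)
end
end

section
/- The extended directed flow formulation IPedf models the Steiner Forest problem correctly: (i) for every feasible Steiner Forest F = (V_F, E_F) there exists an integer point (x,f,z) ∈ 𝔏^{edf} with Σ_{e∈E} c_e x_e = Σ_{e∈E_F} c_e; and (ii) for every integer point (x,f,z) ∈ 𝔏^{edf}, the edge set Ẽ := { e ∈ E : x_e = 1 } contains, for each k ∈ [K], an s–t path in (V, Ẽ) for all s,t ∈ T^k, and its cost Σ_{e∈Ẽ} c_e is at most Σ_{e∈E} c_e x_e. -/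
open Finset
open scoped Classical

noncomputable section

variable {V : Type} [Fintype V] [DecidableEq V]

/-- `t ∈ 𝔗_r^{k…K} = (T^k ∪ … ∪ T^K) \ {r^k}`. -/
def memTkK {K : ℕ} (T : Fin K → Finset V) (r : Fin K → V) (k : Fin K) (t : V) : Prop :=
  (∃ l : Fin K, k ≤ l ∧ t ∈ T l) ∧ t ≠ r k

/-- The subgraph of `G` formed by the edges with `x`-value one. -/
def fromX (G : SimpleGraph V) (x : Sym2 V → ℝ) : SimpleGraph V where
  Adj i j := G.Adj i j ∧ x s(i, j) = 1
  symm := by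
    constructor
    intro i j h
    exact ⟨h.1.symm, by rw [Sym2.eq_swap]; exact h.2⟩
  loopless := by
    constructor
    intro i h
    exact G.irrefl h.1

/-- `H` is a feasible Steiner Forest of the instance `(G, T)`: a cycle-free
subgraph of `G` connecting each terminal set. -/
def IsSteinerForest (G H : SimpleGraph V) {K : ℕ} (T : Fin K → Finset V) : Prop :=
  H ≤ G ∧ H.IsAcyclic ∧ ∀ k : Fin K, ∀ s ∈ T k, ∀ t ∈ T k, H.Reachable s t

/-- Membership in the extended directed flow polytope `𝔏^{edf}`. -/
def memLedf (G : SimpleGraph V) {K : ℕ} (T : Fin K → Finset V) (r : Fin K → V)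
    (x : Sym2 V → ℝ) (xk : Fin K → Sym2 V → ℝ)
    (f : Fin K → V → V → V → ℝ) (z : Fin K → Fin K → ℝ) : Prop :=
  -- variable bounds
  (∀ e ∈ G.edgeSet, 0 ≤ x e ∧ x e ≤ 1) ∧
  (∀ k : Fin K, ∀ e ∈ G.edgeSet, 0 ≤ xk k e ∧ xk k e ≤ 1) ∧
  (∀ k l : Fin K, k ≤ l → 0 ≤ z k l ∧ z k l ≤ 1) ∧
  (∀ (k : Fin K) (t : V), memTkK T r k t →
    (∀ i j : V, ¬ G.Adj i j → f k t i j = 0) ∧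
    (∀ i j : V, 0 ≤ f k t i j ∧ f k t i j ≤ 1)) ∧
  -- (1)  x_{ij} ≥ Σ_k x^k_{ij}
  (∀ i j : V, G.Adj i j → (∑ k : Fin K, xk k s(i, j)) ≤ x s(i, j)) ∧
  -- (2)  Σ_{ℓ ≤ k} z_{ℓk} = 1
  (∀ k : Fin K, (∑ l ∈ Finset.Iic k, z l k) = 1) ∧
  -- (3)  z_{kk} ≥ z_{kℓ} for k ∈ [K] \ {1, K} and ℓ ≥ k + 1
  (∀ k l : Fin K, k.val ≠ 0 → k.val ≠ K - 1 → k < l → z k l ≤ z k k) ∧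
  -- (4)  f^{ks}_{ij} + f^{kt}_{ji} ≤ x^k_{ij}
  (∀ k : Fin K, ∀ u t : V, memTkK T r k u → memTkK T r k t →
    ∀ i j : V, G.Adj i j → f k u i j + f k t j i ≤ xk k s(i, j)) ∧
  -- (5)  flow conservation: a flow of value z_{kℓ} from r^k to each t ∈ T^ℓ
  (∀ k l : Fin K, k ≤ l → ∀ t ∈ T l, t ≠ r k → ∀ i : V,
    (∑ j, f k t j i) - (∑ j, f k t i j) =
      if i = r k then -(z k l) else if i = t then z k l else 0)

/-- All components of a point of `𝔏^{edf}` lie in `{0,1}`. -/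
def LedfIntegral (G : SimpleGraph V) {K : ℕ}
    (x : Sym2 V → ℝ) (xk : Fin K → Sym2 V → ℝ)
    (f : Fin K → V → V → V → ℝ) (z : Fin K → Fin K → ℝ) : Prop :=
  (∀ e ∈ G.edgeSet, x e = 0 ∨ x e = 1) ∧
  (∀ k : Fin K, ∀ e ∈ G.edgeSet, xk k e = 0 ∨ xk k e = 1) ∧
  (∀ (k : Fin K) (t i j : V), f k t i j = 0 ∨ f k t i j = 1) ∧
  (∀ k l : Fin K, k ≤ l → (z k l = 0 ∨ z k l = 1))

set_option linter.unusedSectionVars false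
set_option maxHeartbeats 1000000

def thePath {H : SimpleGraph V} {a b : V} (h : H.Reachable a b) : H.Path a b :=
  (Classical.choice h).toPath


/-- out-degree sum of the dart indicator of a path. -/
lemma sum_out_darts {H : SimpleGraph V} {a b : V} (p : H.Walk a b) (hp : p.IsPath) (i : V) :
    (∑ j, (if ∃ d ∈ p.darts, d.toProd = (i, j) then (1:ℝ) else 0))
      = if i ∈ p.support.dropLast then 1 else 0 := by
  by_cases h : i ∈ p.support.dropLast
  · have h' := h
    rw [← SimpleGraph.Walk.map_fst_darts] at h'
    obtain ⟨d, hd, hfst⟩ := List.mem_map.mp h'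
    rw [if_pos h]
    have hnd : (p.darts.map (·.fst)).Nodup := by
      rw [SimpleGraph.Walk.map_fst_darts]
      exact hp.support_nodup.sublist (List.dropLast_sublist _)
    have key : ∀ j : V, (∃ d' ∈ p.darts, d'.toProd = (i, j)) ↔ j = d.snd := by
      intro j
      constructor
      · rintro ⟨d', hd', hp'⟩
        have hfst' : d'.fst = i := by rw [SimpleGraph.Dart.toProd] at hp'; exact congrArg Prod.fst hp'
        have : d' = d := List.inj_on_of_nodup_map hnd hd' hd (by rw [hfst', hfst])
        subst this
        rw [SimpleGraph.Dart.toProd] at hp'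
        exact (congrArg Prod.snd hp').symm
      · rintro rfl
        exact ⟨d, hd, by ext <;> simp [hfst]⟩
    calc (∑ j, (if ∃ d ∈ p.darts, d.toProd = (i, j) then (1:ℝ) else 0))
        = ∑ j, (if j = d.snd then (1:ℝ) else 0) := by
          apply Finset.sum_congr rfl; intro j _; rw [if_congr (key j) rfl rfl]
      _ = 1 := by rw [Finset.sum_ite_eq' Finset.univ d.snd (fun _ => (1:ℝ))]; simp
  · rw [if_neg h]
    apply Finset.sum_eq_zero
    intro j _
    rw [if_neg]
    rintro ⟨d, hd, hpj⟩
    exact h (by rw [← SimpleGraph.Walk.map_fst_darts]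
                exact List.mem_map.mpr ⟨d, hd, by rw [SimpleGraph.Dart.toProd] at hpj; exact congrArg Prod.fst hpj⟩)

lemma sum_in_darts {H : SimpleGraph V} {a b : V} (p : H.Walk a b) (hp : p.IsPath) (i : V) :
    (∑ j, (if ∃ d ∈ p.darts, d.toProd = (j, i) then (1:ℝ) else 0))
      = if i ∈ p.support.tail then 1 else 0 := by
  by_cases h : i ∈ p.support.tail
  · have h' := h
    rw [← SimpleGraph.Walk.map_snd_darts] at h'
    obtain ⟨d, hd, hsnd⟩ := List.mem_map.mp h'
    rw [if_pos h]
    have hnd : (p.darts.map (·.snd)).Nodup := by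
      rw [SimpleGraph.Walk.map_snd_darts]
      exact hp.support_nodup.sublist (List.tail_sublist _)
    have key : ∀ j : V, (∃ d' ∈ p.darts, d'.toProd = (j, i)) ↔ j = d.fst := by
      intro j
      constructor
      · rintro ⟨d', hd', hp'⟩
        have hsnd' : d'.snd = i := by rw [SimpleGraph.Dart.toProd] at hp'; exact congrArg Prod.snd hp'
        have : d' = d := List.inj_on_of_nodup_map hnd hd' hd (by rw [hsnd', hsnd])
        subst this
        rw [SimpleGraph.Dart.toProd] at hp'
        exact (congrArg Prod.fst hp').symm
      · rintro rfl
        exact ⟨d, hd, by ext <;> simp [hsnd]⟩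
    calc (∑ j, (if ∃ d ∈ p.darts, d.toProd = (j, i) then (1:ℝ) else 0))
        = ∑ j, (if j = d.fst then (1:ℝ) else 0) := by
          apply Finset.sum_congr rfl; intro j _; rw [if_congr (key j) rfl rfl]
      _ = 1 := by rw [Finset.sum_ite_eq' Finset.univ d.fst (fun _ => (1:ℝ))]; simp
  · rw [if_neg h]
    apply Finset.sum_eq_zero
    intro j _
    rw [if_neg]
    rintro ⟨d, hd, hpj⟩
    exact h (by rw [← SimpleGraph.Walk.map_snd_darts]
                exact List.mem_map.mpr ⟨d, hd, by rw [SimpleGraph.Dart.toProd] at hpj; exact congrArg Prod.snd hpj⟩)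

lemma mem_dropLast_iff' {l : List V} (hn : l.Nodup) (hne : l ≠ []) {i : V} :
    i ∈ l.dropLast ↔ i ∈ l ∧ i ≠ l.getLast hne := by
  have hsplit : l.dropLast ++ [l.getLast hne] = l := List.dropLast_append_getLast hne
  constructor
  · intro h
    have hi : i ∈ l := by rw [← hsplit]; exact List.mem_append_left _ h
    refine ⟨hi, ?_⟩
    rintro rfl
    have hnl : l.Nodup := hn
    rw [← hsplit] at hnl
    exact (List.disjoint_of_nodup_append hnl) h (List.mem_singleton_self _)
  · rintro ⟨hi, hne'⟩
    rw [← hsplit] at hi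
    rcases List.mem_append.mp hi with h | h
    · exact h
    · exact absurd (List.mem_singleton.mp h) hne'

lemma mem_tail_iff' {l : List V} (hn : l.Nodup) {a : V} {l' : List V} (hcons : l = a :: l') {i : V} :
    i ∈ l.tail ↔ i ∈ l ∧ i ≠ a := by
  subst hcons
  simp only [List.tail_cons, List.mem_cons]
  have ha : a ∉ l' := (List.nodup_cons.mp hn).1
  constructor
  · intro h
    exact ⟨Or.inr h, fun h' => ha (h' ▸ h)⟩
  · rintro ⟨h | h, hne⟩
    · exact absurd h hne
    · exact h

/-- conservation for the dart indicator of a path -/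
lemma path_conserv {H : SimpleGraph V} {a b : V} (p : H.Walk a b) (hp : p.IsPath) (hab : a ≠ b)
    (hout : ∀ i : V, (∑ j, (if ∃ d ∈ p.darts, d.toProd = (i, j) then (1:ℝ) else 0))
      = if i ∈ p.support.dropLast then 1 else 0)
    (hin : ∀ i : V, (∑ j, (if ∃ d ∈ p.darts, d.toProd = (j, i) then (1:ℝ) else 0))
      = if i ∈ p.support.tail then 1 else 0) (i : V) :
    (∑ j, (if ∃ d ∈ p.darts, d.toProd = (j, i) then (1:ℝ) else 0))
      - (∑ j, (if ∃ d ∈ p.darts, d.toProd = (i, j) then (1:ℝ) else 0))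
      = if i = a then -1 else if i = b then 1 else 0 := by
  rw [hin i, hout i]
  have hne : p.support ≠ [] := p.support_ne_nil
  have hlast : p.support.getLast hne = b := p.getLast_support
  have hcons : p.support = a :: p.support.tail := p.support_eq_cons
  have hnd := hp.support_nodup
  have hiff1 : i ∈ p.support.dropLast ↔ i ∈ p.support ∧ i ≠ b := by
    rw [mem_dropLast_iff' hnd hne, hlast]
  have hiff2 : i ∈ p.support.tail ↔ i ∈ p.support ∧ i ≠ a := mem_tail_iff' hnd hcons
  rw [if_congr hiff1 rfl rfl, if_congr hiff2 rfl rfl]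
  by_cases hia : i = a
  · subst hia
    rw [if_pos rfl, if_neg (by rintro ⟨_, h⟩; exact h rfl),
      if_pos ⟨p.start_mem_support, hab⟩]
    norm_num
  · rw [if_neg hia]
    by_cases hib : i = b
    · subst hib
      rw [if_pos ⟨p.end_mem_support, hia⟩, if_neg (by rintro ⟨_, h⟩; exact h rfl), if_pos rfl]
      norm_num
    · rw [if_neg hib]
      by_cases his : i ∈ p.support
      · rw [if_pos ⟨his, hia⟩, if_pos ⟨his, hib⟩]; ring
      · rw [if_neg (by rintro ⟨h, _⟩; exact his h), if_neg (by rintro ⟨h, _⟩; exact his h)]; ring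

/-- decompose: a path containing dart (i,j) yields a path to j ending from a path to i -/
lemma path_dart_decomp {H : SimpleGraph V} {a s i j : V} (p : H.Walk a s) (hp : p.IsPath)
    (hd : ∃ d ∈ p.darts, d.toProd = (i, j)) :
    ∃ (w : H.Walk a j) (w' : H.Walk a i), w.IsPath ∧ w'.IsPath ∧ w.length = w'.length + 1 := by
  obtain ⟨d, hdmem, hdp⟩ := hd
  have hj : j ∈ p.support := by
    have := SimpleGraph.Walk.dart_snd_mem_support_of_mem_darts p hdmem
    rwa [show d.snd = j from congrArg Prod.snd hdp] at this
  -- the prefix up to j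
  set w := p.takeUntil j hj with hw
  have hwp : w.IsPath := hp.takeUntil hj
  have hdw : d ∈ w.darts := by
    have hsplit := p.take_spec hj
    have : p.darts = w.darts ++ (p.dropUntil j hj).darts := by
      rw [← SimpleGraph.Walk.darts_append, hsplit]
    rw [this] at hdmem
    rcases List.mem_append.mp hdmem with h | h
    · exact h
    · exfalso
      have hjt : d.snd ∈ (p.dropUntil j hj).support.tail := by
        rw [← SimpleGraph.Walk.map_snd_darts]
        exact List.mem_map_of_mem h
      have hq : (p.dropUntil j hj).IsPath := hp.dropUntil hj
      have hcons : (p.dropUntil j hj).support = j :: (p.dropUntil j hj).support.tail :=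
        (p.dropUntil j hj).support_eq_cons
      have hnd := hq.support_nodup
      rw [hcons, List.nodup_cons] at hnd
      rw [show d.snd = j from congrArg Prod.snd hdp] at hjt
      exact hnd.1 hjt
  -- w is not nil
  have hwlen : 0 < w.length := by
    rcases Nat.eq_zero_or_pos w.length with h0 | h
    · exfalso
      have hdnil : w.darts = [] := List.eq_nil_of_length_eq_zero
        (by rw [SimpleGraph.Walk.length_darts, h0])
      rw [hdnil] at hdw
      exact List.not_mem_nil hdw
    · exact h
  have hrevnotnil : ¬ w.reverse.Nil := by
    rw [SimpleGraph.Walk.not_nil_iff_lt_length, SimpleGraph.Walk.length_reverse]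
    exact hwlen
  obtain ⟨x, hxj, q, hrev⟩ := SimpleGraph.Walk.not_nil_iff.mp hrevnotnil
  have hwdec : w = q.reverse.concat hxj.symm := by
    have := congrArg SimpleGraph.Walk.reverse hrev
    rwa [SimpleGraph.Walk.reverse_reverse, SimpleGraph.Walk.reverse_cons] at this
  -- support of w splits
  have hsup : w.support = q.reverse.support.concat j := by
    rw [hwdec, SimpleGraph.Walk.support_concat, List.concat_eq_append]
  have hndw := hwp.support_nodup
  rw [hsup, List.concat_eq_append] at hndw
  have hjnot : j ∉ q.reverse.support := fun h =>
    (List.disjoint_of_nodup_append hndw) h (List.mem_singleton_self _)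
  -- the dart d is the final dart
  have hdfinal : d = SimpleGraph.Dart.mk (x, j) hxj.symm := by
    have hdarts : w.darts = q.reverse.darts ++ [SimpleGraph.Dart.mk (x, j) hxj.symm] := by
      rw [hwdec, SimpleGraph.Walk.concat_eq_append, SimpleGraph.Walk.darts_append]
      rfl
    rw [hdarts] at hdw
    rcases List.mem_append.mp hdw with h | h
    · exfalso
      have : d.snd ∈ q.reverse.support.tail := by
        rw [← SimpleGraph.Walk.map_snd_darts]
        exact List.mem_map_of_mem h
      rw [show d.snd = j from congrArg Prod.snd hdp] at this
      exact hjnot (List.mem_of_mem_tail this)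
    · exact List.mem_singleton.mp h
  have hxi : x = i := by
    have := congrArg Prod.fst hdp
    rw [hdfinal] at this
    exact this
  subst hxi
  refine ⟨w, q.reverse, hwp, ?_, ?_⟩
  · rw [SimpleGraph.Walk.isPath_def]
    exact (List.Nodup.of_append_left hndw)
  · rw [hwdec, SimpleGraph.Walk.length_concat]

lemma flow_reach {f : V → V → ℝ} (hf : ∀ i j, 0 ≤ f i j) {a b : V}
    (hcons : ∀ i : V, (∑ j, f j i) - (∑ j, f i j)
      = if i = a then -1 else if i = b then 1 else 0) :
    Relation.ReflTransGen (fun i j => 0 < f i j) a b := by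
  by_contra hnb
  set Rel : V → V → Prop := fun i j => 0 < f i j with hRel
  set S : Finset V := Finset.univ.filter (fun v => Relation.ReflTransGen Rel a v) with hS
  have haS : a ∈ S := by simp only [hS, Finset.mem_filter]; exact ⟨Finset.mem_univ _, Relation.ReflTransGen.refl⟩
  have hbS : b ∉ S := by simp [hS]; exact hnb
  have hclosed : ∀ i ∈ S, ∀ j, 0 < f i j → j ∈ S := by
    intro i hi j hij
    rw [hS, Finset.mem_filter] at hi ⊢
    exact ⟨Finset.mem_univ _, hi.2.tail hij⟩
  have hsum : ∑ i ∈ S, ((∑ j, f j i) - (∑ j, f i j)) = -1 := by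
    rw [Finset.sum_congr rfl (fun i _ => hcons i)]
    rw [Finset.sum_eq_single_of_mem a haS]
    · rw [if_pos rfl]
    · intro i hi hia
      rw [if_neg hia, if_neg]
      rintro rfl; exact hbS hi
  -- split sums
  have hsplit : ∀ g : V → V → ℝ, ∑ i ∈ S, ∑ j, g i j
      = (∑ i ∈ S, ∑ j ∈ S, g i j) + (∑ i ∈ S, ∑ j ∈ Sᶜ, g i j) := by
    intro g
    rw [← Finset.sum_add_distrib]
    apply Finset.sum_congr rfl
    intro i _
    rw [Finset.sum_add_sum_compl]
  have hzero : ∑ i ∈ S, ∑ j ∈ Sᶜ, f i j = 0 := by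
    apply Finset.sum_eq_zero
    intro i hi
    apply Finset.sum_eq_zero
    intro j hj
    by_contra hne
    have hpos : 0 < f i j := lt_of_le_of_ne (hf i j) (Ne.symm hne)
    exact (Finset.mem_compl.mp hj) (hclosed i hi j hpos)
  have hswap : ∑ i ∈ S, ∑ j ∈ S, f j i = ∑ i ∈ S, ∑ j ∈ S, f i j := Finset.sum_comm
  rw [Finset.sum_sub_distrib, hsplit (fun i j => f j i), hsplit f, hswap, hzero] at hsum
  have hin : (0:ℝ) ≤ ∑ i ∈ S, ∑ j ∈ Sᶜ, f j i :=
    Finset.sum_nonneg fun i _ => Finset.sum_nonneg fun j _ => hf j i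
  linarith

def leadIdx {K : ℕ} (H : SimpleGraph V) (r : Fin K → V) (k : Fin K) : Fin K :=
  (Finset.univ.filter (fun m => H.Reachable (r m) (r k))).min'
    ⟨k, Finset.mem_filter.mpr ⟨Finset.mem_univ _, SimpleGraph.Reachable.refl _⟩⟩

lemma leadIdx_le {K : ℕ} (H : SimpleGraph V) (r : Fin K → V) (k : Fin K) : leadIdx H r k ≤ k := by
  unfold leadIdx
  apply Finset.min'_le
  exact Finset.mem_filter.mpr ⟨Finset.mem_univ _, SimpleGraph.Reachable.refl _⟩

lemma leadIdx_reach {K : ℕ} (H : SimpleGraph V) (r : Fin K → V) (k : Fin K) :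
    H.Reachable (r (leadIdx H r k)) (r k) := by
  have h := Finset.min'_mem (Finset.univ.filter (fun m => H.Reachable (r m) (r k)))
    ⟨k, Finset.mem_filter.mpr ⟨Finset.mem_univ _, SimpleGraph.Reachable.refl _⟩⟩
  exact (Finset.mem_filter.mp h).2

lemma leadIdx_congr {K : ℕ} (H : SimpleGraph V) (r : Fin K → V) {k l : Fin K}
    (h : H.Reachable (r k) (r l)) : leadIdx H r k = leadIdx H r l := by
  unfold leadIdx
  congr 1
  apply Finset.filter_congr
  intro m _
  constructor
  · intro h'; exact h'.trans h
  · intro h'; exact h'.trans h.symm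

lemma leadIdx_idem {K : ℕ} (H : SimpleGraph V) (r : Fin K → V) (k : Fin K) :
    leadIdx H r (leadIdx H r k) = leadIdx H r k :=
  leadIdx_congr H r (leadIdx_reach H r k)

lemma no_opposite {H : SimpleGraph V} (hac : H.IsAcyclic) {a s t i j : V}
    (p : H.Walk a s) (hp : p.IsPath) (q : H.Walk a t) (hq : q.IsPath)
    (h1 : ∃ d ∈ p.darts, d.toProd = (i, j)) (h2 : ∃ d ∈ q.darts, d.toProd = (j, i)) : False := by
  obtain ⟨w1, w1', hw1, hw1', hlen1⟩ := path_dart_decomp p hp h1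
  obtain ⟨w2, w2', hw2, hw2', hlen2⟩ := path_dart_decomp q hq h2
  have e1 : (⟨w1, hw1⟩ : H.Path a j) = ⟨w2', hw2'⟩ := hac.path_unique _ _
  have e2 : (⟨w1', hw1'⟩ : H.Path a i) = ⟨w2, hw2⟩ := hac.path_unique _ _
  have l1 : w1.length = w2'.length := congrArg (fun P : H.Path a j => P.1.length) e1
  have l2 : w1'.length = w2.length := congrArg (fun P : H.Path a i => P.1.length) e2
  omega

/-- The extended directed flow formulation IPedf models the
Steiner Forest problem correctly. -/
theorem IPedf_models_SteinerForest (G : SimpleGraph V) {K : ℕ}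
    (T : Fin K → Finset V) (r : Fin K → V) (c : Sym2 V → ℝ)
    (hc : ∀ e ∈ G.edgeSet, 0 ≤ c e)
    (hroot : ∀ k, r k ∈ T k)
    (hdisj : ∀ k l : Fin K, k ≠ l → Disjoint (T k) (T l)) :
    -- (i) every feasible Steiner Forest yields an integer point of the same cost
    (∀ H : SimpleGraph V, IsSteinerForest G H T →
      ∃ (x : Sym2 V → ℝ) (xk : Fin K → Sym2 V → ℝ)
        (f : Fin K → V → V → V → ℝ) (z : Fin K → Fin K → ℝ),
        memLedf G T r x xk f z ∧ LedfIntegral G x xk f z ∧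
        (∑ e ∈ G.edgeFinset, c e * x e) = (∑ e ∈ H.edgeFinset, c e)) ∧
    -- (ii) every integer point connects each terminal set, at no larger cost
    (∀ (x : Sym2 V → ℝ) (xk : Fin K → Sym2 V → ℝ)
        (f : Fin K → V → V → V → ℝ) (z : Fin K → Fin K → ℝ),
      memLedf G T r x xk f z → LedfIntegral G x xk f z →
        (∀ k : Fin K, ∀ s ∈ T k, ∀ t ∈ T k, (fromX G x).Reachable s t) ∧
        (∑ e ∈ (fromX G x).edgeFinset, c e) ≤ (∑ e ∈ G.edgeFinset, c e * x e)) := by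
  constructor
  · rintro H ⟨hle, hac, hcon⟩
    set F : Fin K → V → V → V → ℝ := fun k t i j =>
      if h : (∃ l, k = leadIdx H r l ∧ t ∈ T l) ∧ t ≠ r k ∧ H.Reachable (r k) t then
        (if ∃ d ∈ (thePath h.2.2).1.darts, d.toProd = (i, j) then 1 else 0)
      else 0 with hF
    set X : Sym2 V → ℝ := fun e => if e ∈ H.edgeSet then 1 else 0 with hX
    set XK : Fin K → Sym2 V → ℝ :=
      fun k e => if ∃ t a b, F k t a b = 1 ∧ s(a, b) = e then 1 else 0 with hXK
    set Z : Fin K → Fin K → ℝ := fun k l => if k = leadIdx H r l then 1 else 0 with hZ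
    have hF01 : ∀ k t i j, F k t i j = 0 ∨ F k t i j = 1 := by
      intro k t i j
      simp only [hF]
      split
      · split
        · right; rfl
        · left; rfl
      · left; rfl
    have hFprop : ∀ k t i j, F k t i j ≠ 0 →
        k = leadIdx H r k ∧ H.Adj i j ∧ H.Reachable (r k) i ∧
        ∃ w : H.Walk (r k) t, w.IsPath ∧ ∃ d ∈ w.darts, d.toProd = (i, j) := by
      intro k t i j hne
      simp only [hF] at hne
      by_cases h : (∃ l, k = leadIdx H r l ∧ t ∈ T l) ∧ t ≠ r k ∧ H.Reachable (r k) t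
      · rw [dif_pos h] at hne
        have hwp : (thePath h.2.2).1.IsPath := (thePath h.2.2).2
        have hd : ∃ d ∈ (thePath h.2.2).1.darts, d.toProd = (i, j) := by
          by_contra hd
          rw [if_neg hd] at hne
          exact hne rfl
        obtain ⟨d, hdm, hdp⟩ := hd
        have hadj : H.Adj i j := by
          have hda := d.adj
          rw [hdp] at hda
          exact hda
        have hfst : d.fst = i := congrArg Prod.fst hdp
        have hi : i ∈ (thePath h.2.2).1.support := by
          have hm := SimpleGraph.Walk.dart_fst_mem_support_of_mem_darts _ hdm
          rwa [hfst] at hm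
        have hreachi : H.Reachable (r k) i := ⟨(thePath h.2.2).1.takeUntil i hi⟩
        obtain ⟨l, hkl, _⟩ := h.1
        have hkk : leadIdx H r k = k := by
          rw [hkl]
          exact leadIdx_idem H r l
        exact ⟨hkk.symm, hadj, hreachi, (thePath h.2.2).1, hwp, d, hdm, hdp⟩
      · rw [dif_neg h] at hne
        exact absurd rfl hne
    have hFcond : ∀ k t
        (h : (∃ l, k = leadIdx H r l ∧ t ∈ T l) ∧ t ≠ r k ∧ H.Reachable (r k) t),
        ∀ i j, F k t i j
          = if ∃ d ∈ (thePath h.2.2).1.darts, d.toProd = (i, j) then (1:ℝ) else 0 := by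
      intro k t h i j
      simp only [hF]
      rw [dif_pos h]
    refine ⟨X, XK, F, Z, ⟨?_, ?_, ?_, ?_, ?_, ?_, ?_, ?_, ?_⟩, ⟨?_, ?_, ?_, ?_⟩, ?_⟩
    · -- x bounds
      intro e _
      simp only [hX]
      split <;> norm_num
    · -- xk bounds
      intro k e _
      simp only [hXK]
      split <;> norm_num
    · -- z bounds
      intro k l _
      simp only [hZ]
      split <;> norm_num
    · -- flow support and bounds
      intro k t _
      constructor
      · intro i j hna
        by_contra hne
        exact hna (hle (hFprop k t i j hne).2.1)
      · intro i j
        rcases hF01 k t i j with h | h <;> rw [h] <;> norm_num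
    · -- (1)
      intro i j hadj
      by_cases hex : ∃ k₀ : Fin K, XK k₀ s(i, j) ≠ 0
      · obtain ⟨k₀, hk₀⟩ := hex
        have hW : ∃ t a b, F k₀ t a b = 1 ∧ s(a, b) = s(i, j) := by
          by_contra hw
          apply hk₀
          simp only [hXK]
          rw [if_neg hw]
        obtain ⟨t, a, b, hFab, hsab⟩ := hW
        have hprop := hFprop k₀ t a b (by rw [hFab]; norm_num)
        have hHadj : H.Adj a b := hprop.2.1
        have hXe : X s(i, j) = 1 := by
          simp only [hX]
          rw [if_pos (by rw [← hsab]; exact hHadj)]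
        rw [hXe]
        have hsum : (∑ k, XK k s(i, j)) = XK k₀ s(i, j) := by
          apply Finset.sum_eq_single_of_mem k₀ (Finset.mem_univ _)
          intro k _ hkne
          by_contra hkne0
          have hW' : ∃ t a b, F k t a b = 1 ∧ s(a, b) = s(i, j) := by
            by_contra hw
            apply hkne0
            simp only [hXK]
            rw [if_neg hw]
          obtain ⟨t', a', b', hF', hs'⟩ := hW'
          have hprop' := hFprop k t' a' b' (by rw [hF']; norm_num)
          have hends : (a' = a ∧ b' = b) ∨ (a' = b ∧ b' = a) := by
            rw [← hsab] at hs'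
            exact Sym2.eq_iff.mp hs'
          have ha'a : H.Reachable a' a := by
            rcases hends with ⟨h1', _⟩ | ⟨h1', _⟩
            · rw [h1']
            · rw [h1']; exact hHadj.symm.reachable
          have hreach : H.Reachable (r k) (r k₀) :=
            (hprop'.2.2.1.trans ha'a).trans hprop.2.2.1.symm
          have hkk : k = k₀ := by
            have hcongr := leadIdx_congr H r hreach
            rw [← hprop'.1, ← hprop.1] at hcongr
            exact hcongr
          exact hkne hkk
        rw [hsum]
        simp only [hXK]
        split <;> norm_num
      · push_neg at hex
        have hs0 : (∑ k, XK k s(i, j)) = 0 := Finset.sum_eq_zero fun k _ => hex k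
        rw [hs0]
        simp only [hX]
        split <;> norm_num
    · -- (2)
      intro k
      simp only [hZ]
      rw [Finset.sum_ite_eq' (Finset.Iic k) (leadIdx H r k) (fun _ => (1:ℝ))]
      rw [if_pos (Finset.mem_Iic.mpr (leadIdx_le H r k))]
    · -- (3)
      intro k l _ _ _
      simp only [hZ]
      by_cases h : k = leadIdx H r l
      · have hr' : H.Reachable (r k) (r l) := by
          rw [h]; exact leadIdx_reach H r l
        have hlk : leadIdx H r k = k := by
          rw [leadIdx_congr H r hr', ← h]
        rw [if_pos h, if_pos hlk.symm]
      · rw [if_neg h]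
        split <;> norm_num
    · -- (4)
      intro k u t hu ht i j hadj
      rcases hF01 k u i j with h1' | h1' <;> rcases hF01 k t j i with h2' | h2'
      · rw [h1', h2']
        simp only [hXK]
        split <;> norm_num
      · rw [h1', h2']
        have hXK1 : XK k s(i, j) = 1 := by
          simp only [hXK]
          rw [if_pos ⟨t, j, i, h2', Sym2.eq_swap⟩]
        rw [hXK1]
        norm_num
      · rw [h1', h2']
        have hXK1 : XK k s(i, j) = 1 := by
          simp only [hXK]
          rw [if_pos ⟨u, i, j, h1', rfl⟩]
        rw [hXK1]
        norm_num
      · exfalso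
        obtain ⟨_, _, _, w1, hw1, hd1⟩ := hFprop k u i j (by rw [h1']; norm_num)
        obtain ⟨_, _, _, w2, hw2, hd2⟩ := hFprop k t j i (by rw [h2']; norm_num)
        exact no_opposite hac w1 hw1 w2 hw2 hd1 hd2
    · -- (5)
      intro k l hkl t ht htr i
      by_cases hkl0 : k = leadIdx H r l
      · have hreach : H.Reachable (r k) t := by
          have h1' : H.Reachable (r k) (r l) := by
            rw [hkl0]; exact leadIdx_reach H r l
          exact h1'.trans (hcon l (r l) (hroot l) t ht)
        have hcond : (∃ l', k = leadIdx H r l' ∧ t ∈ T l') ∧ t ≠ r k ∧ H.Reachable (r k) t :=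
          ⟨⟨l, hkl0, ht⟩, htr, hreach⟩
        have hZ1 : Z k l = 1 := by
          simp only [hZ]; rw [if_pos hkl0]
        have hPp : (thePath hcond.2.2).1.IsPath := (thePath hcond.2.2).2
        have e1 : (∑ j, F k t j i)
            = ∑ j, (if ∃ d ∈ (thePath hcond.2.2).1.darts, d.toProd = (j, i) then (1:ℝ) else 0) :=
          Finset.sum_congr rfl fun j _ => hFcond k t hcond j i
        have e2 : (∑ j, F k t i j)
            = ∑ j, (if ∃ d ∈ (thePath hcond.2.2).1.darts, d.toProd = (i, j) then (1:ℝ) else 0) :=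
          Finset.sum_congr rfl fun j _ => hFcond k t hcond i j
        rw [e1, e2, hZ1]
        exact path_conserv (thePath hcond.2.2).1 hPp (fun h => htr h.symm)
          (sum_out_darts (thePath hcond.2.2).1 hPp) (sum_in_darts (thePath hcond.2.2).1 hPp) i
      · have hZ0 : Z k l = 0 := by
          simp only [hZ]; rw [if_neg hkl0]
        have hF0 : ∀ i' j', F k t i' j' = 0 := by
          intro i' j'
          by_contra hne
          simp only [hF] at hne
          by_cases h : (∃ l', k = leadIdx H r l' ∧ t ∈ T l') ∧ t ≠ r k ∧ H.Reachable (r k) t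
          · obtain ⟨l', hkl', htl'⟩ := h.1
            have hll : l' = l := by
              by_contra hllne
              exact (Finset.disjoint_left.mp (hdisj l' l hllne) htl') ht
            exact hkl0 (hll ▸ hkl')
          · rw [dif_neg h] at hne
            exact hne rfl
        rw [hZ0, Finset.sum_eq_zero (fun j _ => hF0 j i), Finset.sum_eq_zero (fun j _ => hF0 i j)]
        simp
    · -- integrality x
      intro e _
      simp only [hX]
      split
      · right; rfl
      · left; rfl
    · -- integrality xk
      intro k e _
      simp only [hXK]
      split
      · right; rfl
      · left; rfl
    · -- integrality f
      exact hF01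
    · -- integrality z
      intro k l _
      simp only [hZ]
      split
      · right; rfl
      · left; rfl
    · -- cost
      have hsub : H.edgeFinset ⊆ G.edgeFinset := SimpleGraph.edgeFinset_mono hle
      have h0 : ∀ e ∈ G.edgeFinset, e ∉ H.edgeFinset → c e * X e = 0 := by
        intro e _ heH
        have hnm : e ∉ H.edgeSet := fun h => heH (SimpleGraph.mem_edgeFinset.mpr h)
        simp only [hX]
        rw [if_neg hnm, mul_zero]
      rw [← Finset.sum_subset hsub h0]
      apply Finset.sum_congr rfl
      intro e he
      simp only [hX]
      rw [if_pos (SimpleGraph.mem_edgeFinset.mp he), mul_one]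
  · rintro x xk f z hmem hint
    obtain ⟨hxb, hxkb, hzb, hfb, h1, h2, h3, h4, h5⟩ := hmem
    obtain ⟨hxI, hxkI, hfI, hzI⟩ := hint
    constructor
    · intro k s hs t ht
      have hex : ∃ l ∈ Finset.Iic k, z l k ≠ 0 := by
        by_contra hno
        push_neg at hno
        have h0 : (∑ l ∈ Finset.Iic k, z l k) = 0 := Finset.sum_eq_zero fun l hl => hno l hl
        rw [h2 k] at h0
        norm_num at h0
      obtain ⟨l, hlk, hlne⟩ := hex
      have hlk' : l ≤ k := Finset.mem_Iic.mp hlk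
      have hz1 : z l k = 1 := (hzI l k hlk').resolve_left hlne
      have key : ∀ t' ∈ T k, (fromX G x).Reachable (r l) t' := by
        intro t' ht'
        by_cases hteq : t' = r l
        · rw [hteq]
        · have hmemT : memTkK T r l t' := ⟨⟨k, hlk', ht'⟩, hteq⟩
          have hcons := h5 l k hlk' t' ht' hteq
          simp only [hz1] at hcons
          have hRTG := flow_reach (fun i j => ((hfb l t' hmemT).2 i j).1) hcons
          rw [SimpleGraph.reachable_iff_reflTransGen]
          refine Relation.ReflTransGen.mono ?_ _ _ hRTG
          intro i j hij
          have hne0 : f l t' i j ≠ 0 := ne_of_gt hij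
          have hGadj : G.Adj i j := by
            by_contra hna
            exact hne0 ((hfb l t' hmemT).1 i j hna)
          have hxk1 : (1:ℝ) ≤ xk l s(i, j) := by
            have h4' := h4 l t' t' hmemT hmemT i j hGadj
            have hf1 : f l t' i j = 1 := (hfI l t' i j).resolve_left hne0
            have hnn := ((hfb l t' hmemT).2 j i).1
            linarith
          have hxge : (1:ℝ) ≤ x s(i, j) := by
            have hsum := h1 i j hGadj
            have hsingle : xk l s(i, j) ≤ ∑ k', xk k' s(i, j) :=
              Finset.single_le_sum (fun k' _ => (hxkb k' _ hGadj).1) (Finset.mem_univ l)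
            linarith
          have hx1 : x s(i, j) = 1 := le_antisymm (hxb _ hGadj).2 hxge
          exact ⟨hGadj, hx1⟩
      exact ((key s hs).symm.trans (key t ht))
    · have hsub : (fromX G x).edgeFinset ⊆ G.edgeFinset := by
        apply SimpleGraph.edgeFinset_mono
        intro i j hij
        exact hij.1
      have hstep : ∀ e ∈ (fromX G x).edgeFinset, c e = c e * x e := by
        intro e he
        rw [SimpleGraph.mem_edgeFinset] at he
        revert he
        refine Sym2.ind (fun i j he => ?_) e
        rw [SimpleGraph.mem_edgeSet] at he
        rw [he.2]
        ring
      calc ∑ e ∈ (fromX G x).edgeFinset, c e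
          = ∑ e ∈ (fromX G x).edgeFinset, c e * x e := Finset.sum_congr rfl hstep
        _ ≤ ∑ e ∈ G.edgeFinset, c e * x e := by
            apply Finset.sum_le_sum_of_subset_of_nonneg hsub
            intro e heG _
            have heS : e ∈ G.edgeSet := SimpleGraph.mem_edgeFinset.mp heG
            exact mul_nonneg (hc e heS) (hxb e heS).1
end
end

section
/- Let F = (V_F, E_F) be a feasible Steiner Forest for (G, 𝔗, c) with cost C = Σ_{e∈E_F} c_e. Then there exists an integer feasible solution (x*, y*, z*) to the extended directed cut formulation, i.e. an integer point of 𝔏^{edc}, with Σ_{e∈E} c_e x*_e = C. -/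
open Finset
open scoped Classical

noncomputable section

variable {V : Type} [Fintype V] [DecidableEq V]

/-- Membership in the extended directed cut polytope `𝔏^{edc}`. -/
def memLedc (G : SimpleGraph V) {K : ℕ} (T : Fin K → Finset V) (r : Fin K → V)
    (x : Sym2 V → ℝ) (y : V → V → ℝ) (z : Fin K → Fin K → ℝ) : Prop :=
  -- variable bounds
  (∀ e ∈ G.edgeSet, 0 ≤ x e ∧ x e ≤ 1) ∧
  (∀ i j : V, ¬ G.Adj i j → y i j = 0) ∧
  (∀ i j : V, 0 ≤ y i j ∧ y i j ≤ 1) ∧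
  (∀ k l : Fin K, k ≤ l → 0 ≤ z k l ∧ z k l ≤ 1) ∧
  -- (1)  y(δ⁺(S)) ≥ Σ_{ℓ ≤ k, r^ℓ ∈ S} z_{ℓk} whenever T^k ∩ S ≠ T^k
  (∀ k : Fin K, ∀ S : Finset V, T k ∩ S ≠ T k →
    (∑ l ∈ (Finset.Iic k).filter (fun l => r l ∈ S), z l k) ≤ acutOut y S) ∧
  -- (2)  Σ_{ℓ ≤ k} z_{ℓk} = 1
  (∀ k : Fin K, (∑ l ∈ Finset.Iic k, z l k) = 1) ∧
  -- (3)  z_{kk} ≥ z_{kℓ} for k ∈ [K] \ {1, K} and ℓ ≥ k + 1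
  (∀ k l : Fin K, k.val ≠ 0 → k.val ≠ K - 1 → k < l → z k l ≤ z k k) ∧
  -- (4)  y_{ij} + y_{ji} ≤ x_{ij}
  (∀ i j : V, G.Adj i j → y i j + y j i ≤ x s(i, j))

/-- All components of a point of `𝔏^{edc}` lie in `{0,1}`. -/
def LedcIntegral (G : SimpleGraph V) {K : ℕ}
    (x : Sym2 V → ℝ) (y : V → V → ℝ) (z : Fin K → Fin K → ℝ) : Prop :=
  (∀ e ∈ G.edgeSet, x e = 0 ∨ x e = 1) ∧
  (∀ i j : V, y i j = 0 ∨ y i j = 1) ∧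
  (∀ k l : Fin K, k ≤ l → (z k l = 0 ∨ z k l = 1))

/-- The set of root indices reachable (in `H`) from a vertex `v`. -/
def rset {K : ℕ} (H : SimpleGraph V) (r : Fin K → V) (v : V) : Finset (Fin K) :=
  Finset.univ.filter (fun l => H.Reachable (r l) v)

lemma mem_rset {K : ℕ} {H : SimpleGraph V} {r : Fin K → V} {v : V} {l : Fin K} :
    l ∈ rset H r v ↔ H.Reachable (r l) v := by simp [rset]

lemma rset_adj {K : ℕ} (H : SimpleGraph V) (r : Fin K → V) {i j : V} (h : H.Adj i j) :
    rset H r i = rset H r j := by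
  ext l
  simp only [mem_rset]
  exact ⟨fun hr => hr.trans h.reachable, fun hr => hr.trans h.symm.reachable⟩

/-- The orientation of the edges of `H`: away from the minimal-index root of a component. -/
noncomputable def yArc {K : ℕ} (H : SimpleGraph V) (r : Fin K → V) (i j : V) : ℝ :=
  if H.Adj i j ∧ ∃ l : Fin K, l ∈ rset H r i ∧ (∀ l' ∈ rset H r i, l ≤ l') ∧
      H.dist (r l) j = H.dist (r l) i + 1 then 1 else 0

lemma yArc_nonneg {K : ℕ} (H : SimpleGraph V) (r : Fin K → V) (i j : V) :
    0 ≤ yArc H r i j := by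
  unfold yArc; split <;> norm_num

lemma le_acutOut (y : V → V → ℝ) (hy : ∀ i j, 0 ≤ y i j) {S : Finset V} {a b : V}
    (ha : a ∈ S) (hb : b ∈ Sᶜ) : y a b ≤ acutOut y S := by
  unfold acutOut
  calc y a b ≤ ∑ j ∈ Sᶜ, y a j := Finset.single_le_sum (fun j _ => hy a j) hb
    _ ≤ ∑ i ∈ S, ∑ j ∈ Sᶜ, y i j :=
      Finset.single_le_sum (fun i _ => Finset.sum_nonneg fun j _ => hy i j) ha

/-- If the root `r m` is in `S`, `t` is outside `S` and reachable from `r m`, and `m` is the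
minimal index whose root reaches `t`, then some `yArc`-oriented edge leaves `S`. -/
lemma exists_cross {K : ℕ} (H : SimpleGraph V) (r : Fin K → V) (m : Fin K)
    (S : Finset V) (hm : r m ∈ S) :
    ∀ n (t : V), H.dist (r m) t = n → t ∉ S → H.Reachable (r m) t →
      (∀ l', H.Reachable (r l') t → m ≤ l') →
      ∃ a ∈ S, ∃ b ∈ Sᶜ, yArc H r a b = 1 := by
  intro n
  induction n using Nat.strong_induction_on with
  | _ n ih =>
    intro t hd htS hreach hmin
    have hne : r m ≠ t := fun h => htS (h ▸ hm)
    have hdpos : 0 < n := by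
      rcases Nat.eq_zero_or_pos n with h0 | h
      · exact absurd (hreach.dist_eq_zero_iff.mp (h0 ▸ hd)) hne
      · exact h
    obtain ⟨p, hp⟩ := hreach.exists_walk_length_eq_dist
    obtain ⟨i, hadj, q, hq⟩ := SimpleGraph.Walk.exists_eq_cons_of_ne hne.symm p.reverse
    -- hadj : H.Adj t i, q : H.Walk i (r m)
    have hqlen : q.length + 1 = n := by
      have := congrArg SimpleGraph.Walk.length hq
      simp only [SimpleGraph.Walk.length_reverse, SimpleGraph.Walk.length_cons] at this
      omega
    have hreach_i : H.Reachable (r m) i := ⟨q.reverse⟩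
    have hdist_i_le : H.dist (r m) i ≤ n - 1 := by
      have := SimpleGraph.dist_le q.reverse
      simpa [SimpleGraph.Walk.length_reverse, ← hqlen] using this
    have hdist_t_le : H.dist (r m) t ≤ H.dist (r m) i + 1 := by
      obtain ⟨w, hw⟩ := hreach_i.exists_walk_length_eq_dist
      have := SimpleGraph.dist_le (w.concat hadj.symm)
      simpa [SimpleGraph.Walk.length_concat, hw] using this
    have hdist_i : H.dist (r m) i = n - 1 := by omega
    have hdist_eq : H.dist (r m) t = H.dist (r m) i + 1 := by omega
    have hmin_i : ∀ l', H.Reachable (r l') i → m ≤ l' := fun l' h =>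
      hmin l' (h.trans hadj.symm.reachable)
    have hy : yArc H r i t = 1 := by
      rw [yArc, if_pos]
      exact ⟨hadj.symm, m, mem_rset.mpr hreach_i,
        fun l' hl' => hmin_i l' (mem_rset.mp hl'), hdist_eq⟩
    by_cases hiS : i ∈ S
    · exact ⟨i, hiS, t, Finset.mem_compl.mpr htS, hy⟩
    · exact ih (n - 1) (by omega) i hdist_i hiS hreach_i hmin_i

/-- Every feasible Steiner Forest of cost `C` yields an
integer feasible solution of the extended directed cut formulation of cost `C`. -/
theorem SteinerForest_to_Ledc_integer_point (G : SimpleGraph V) {K : ℕ}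
    (T : Fin K → Finset V) (r : Fin K → V) (c : Sym2 V → ℝ)
    (hc : ∀ e ∈ G.edgeSet, 0 ≤ c e)
    (hroot : ∀ k, r k ∈ T k)
    (hdisj : ∀ k l : Fin K, k ≠ l → Disjoint (T k) (T l))
    (H : SimpleGraph V) (hH : IsSteinerForest G H T) :
    ∃ (x : Sym2 V → ℝ) (y : V → V → ℝ) (z : Fin K → Fin K → ℝ),
      memLedc G T r x y z ∧ LedcIntegral G x y z ∧
      (∑ e ∈ G.edgeFinset, c e * x e) = (∑ e ∈ H.edgeFinset, c e) := by
  obtain ⟨hle, _hacyc, hconn⟩ := hH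
  have phis : ∀ k : Fin K, (rset H r (r k)).Nonempty :=
    fun k => ⟨k, mem_rset.mpr (SimpleGraph.Reachable.refl _)⟩
  set φ : Fin K → Fin K := fun k => (rset H r (r k)).min' (phis k) with hφ
  have hφmem : ∀ k, H.Reachable (r (φ k)) (r k) :=
    fun k => mem_rset.mp (Finset.min'_mem _ (phis k))
  have hφle : ∀ k, φ k ≤ k :=
    fun k => Finset.min'_le _ k (mem_rset.mpr (SimpleGraph.Reachable.refl _))
  have hφmin : ∀ k l', H.Reachable (r l') (r k) → φ k ≤ l' :=
    fun k l' h => Finset.min'_le _ l' (mem_rset.mpr h)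
  refine ⟨fun e => if e ∈ H.edgeSet then 1 else 0, yArc H r,
    fun l k => if l = φ k then 1 else 0, ⟨?_, ?_, ?_, ?_, ?_, ?_, ?_, ?_⟩, ⟨?_, ?_, ?_⟩, ?_⟩
  · intro e _; dsimp only; split <;> norm_num
  · intro i j hG
    rw [yArc, if_neg]
    rintro ⟨hAdj, -⟩
    exact hG (hle hAdj)
  · intro i j; unfold yArc; split <;> norm_num
  · intro k l _; dsimp only; split <;> norm_num
  · -- constraint (1)
    intro k S hS
    dsimp only
    rw [Finset.sum_ite_eq']
    by_cases hrS : r (φ k) ∈ S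
    · rw [if_pos (by simp [Finset.mem_filter, Finset.mem_Iic, hφle k, hrS])]
      have hnotsub : ¬ T k ⊆ S := fun h => hS (Finset.inter_eq_left.mpr h)
      obtain ⟨t, htT, htS⟩ := Finset.not_subset.mp hnotsub
      have hrkt : H.Reachable (r k) t := hconn k (r k) (hroot k) t htT
      have hreach : H.Reachable (r (φ k)) t := (hφmem k).trans hrkt
      have hmin : ∀ l', H.Reachable (r l') t → φ k ≤ l' :=
        fun l' h => hφmin k l' (h.trans hrkt.symm)
      obtain ⟨a, ha, b, hb, hab⟩ :=
        exists_cross H r (φ k) S hrS (H.dist (r (φ k)) t) t rfl htS hreach hmin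
      calc (1 : ℝ) = yArc H r a b := hab.symm
        _ ≤ acutOut (yArc H r) S := le_acutOut _ (yArc_nonneg H r) ha hb
    · rw [if_neg (by simp [Finset.mem_filter, hrS])]
      exact Finset.sum_nonneg fun i _ => Finset.sum_nonneg fun j _ => yArc_nonneg H r i j
  · -- constraint (2)
    intro k
    dsimp only
    rw [Finset.sum_ite_eq', if_pos (Finset.mem_Iic.mpr (hφle k))]
  · -- constraint (3)
    intro k l _ _ _
    dsimp only
    by_cases h : k = φ l
    · have hkl : H.Reachable (r k) (r l) := h ▸ hφmem l
      have hset : rset H r (r k) = rset H r (r l) := by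
        ext l'
        simp only [mem_rset]
        exact ⟨fun hr => hr.trans hkl, fun hr => hr.trans hkl.symm⟩
      have hφk : φ k = φ l := by
        simp only [hφ]
        congr 1
      rw [if_pos h, if_pos (h.trans hφk.symm)]
    · simp only [if_neg h]
      split <;> norm_num
  · -- constraint (4)
    intro i j hG
    dsimp only
    by_cases hAdj : H.Adj i j
    · rw [if_pos (H.mem_edgeSet.mpr hAdj)]
      unfold yArc
      split_ifs with h1 h2 h2 <;> try norm_num
      obtain ⟨-, l1, hl1m, hl1min, hd1⟩ := h1
      obtain ⟨-, l2, hl2m, hl2min, hd2⟩ := h2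
      have hset : rset H r i = rset H r j := rset_adj H r hAdj
      have hll : l1 = l2 :=
        le_antisymm (hl1min l2 (hset ▸ hl2m)) (hl2min l1 (hset ▸ hl1m))
      rw [← hll] at hd2
      omega
    · have h1 : yArc H r i j = 0 := by rw [yArc, if_neg]; rintro ⟨h, -⟩; exact hAdj h
      have h2 : yArc H r j i = 0 := by
        rw [yArc, if_neg]; rintro ⟨h, -⟩; exact hAdj h.symm
      rw [h1, h2]
      split <;> norm_num
  · intro e _; dsimp only; split <;> norm_num
  · intro i j; unfold yArc; split <;> norm_num
  · intro k l _; dsimp only; split <;> norm_num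
  · -- the cost
    dsimp only
    have hmul : ∀ e ∈ G.edgeFinset,
        c e * (if e ∈ H.edgeSet then (1 : ℝ) else 0) = if e ∈ H.edgeSet then c e else 0 := by
      intro e _; split <;> ring
    rw [Finset.sum_congr rfl hmul, Finset.sum_ite, Finset.sum_const_zero, add_zero]
    refine Finset.sum_congr ?_ fun _ _ => rfl
    ext e
    simp only [Finset.mem_filter, SimpleGraph.mem_edgeFinset, SimpleGraph.mem_edgeSet]
    constructor
    · rintro ⟨-, h⟩; exact h
    · intro h
      exact ⟨(SimpleGraph.edgeSet_subset_edgeSet.mpr hle : H.edgeSet ⊆ G.edgeSet) h, h⟩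
end
end

section
/- Let (x*, y*, z*) be a feasible integer solution to the extended directed cut formulation, i.e. an integer point of 𝔏^{edc}. Then in the graph F := (V, { {i,j} ∈ E : x*_{ij} = 1 }), for every k ∈ [K] and every terminal t ∈ T^k, the root r^k and t lie in the same connected component; that is, F connects each terminal set. -/
open Finset
open scoped Classical

noncomputable section

variable {V : Type} [Fintype V] [DecidableEq V]

/-- For every feasible integer solution of the extended
directed cut formulation, the graph formed by the edges with `x`-value one
connects each root `r k` with every terminal of `T k`. -/
theorem Ledc_integer_point_connects (G : SimpleGraph V) {K : ℕ}
    (T : Fin K → Finset V) (r : Fin K → V)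
    (hroot : ∀ k, r k ∈ T k)
    (hdisj : ∀ k l : Fin K, k ≠ l → Disjoint (T k) (T l))
    (x : Sym2 V → ℝ) (y : V → V → ℝ) (z : Fin K → Fin K → ℝ)
    (hmem : memLedc G T r x y z) (hint : LedcIntegral G x y z) :
    ∀ k : Fin K, ∀ t ∈ T k, (fromX G x).Reachable (r k) t := by
  obtain ⟨hx01, hyadj, hy01, hz01, hcut, hsum, -, hxy⟩ := hmem
  obtain ⟨hxint, hyint, hzint⟩ := hint
  intro k t ht
  -- pick l ≤ k with z l k = 1
  obtain ⟨l, hl, hlz⟩ : ∃ l ∈ Finset.Iic k, z l k ≠ 0 := by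
    by_contra h
    push_neg at h
    have := hsum k
    rw [Finset.sum_eq_zero h] at this
    norm_num at this
  rw [Finset.mem_Iic] at hl
  have hzl1 : z l k = 1 := (hzint l k hl).resolve_left hlz
  -- the component of r l
  set S : Finset V := Finset.univ.filter (fun v => (fromX G x).Reachable (r l) v) with hS
  have hrlS : r l ∈ S := by simp only [hS, Finset.mem_filter, Finset.mem_univ, true_and]; exact SimpleGraph.Reachable.refl _
  -- cut value on S is zero
  have hcut0 : acutOut y S = 0 := by
    apply Finset.sum_eq_zero
    intro i hi
    apply Finset.sum_eq_zero
    intro j hj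
    by_contra hne
    have hy1 : y i j = 1 := (hyint i j).resolve_left hne
    have hadj : G.Adj i j := by
      by_contra hna
      exact hne (hyadj i j hna)
    have hx1 : x s(i, j) = 1 := by
      have h1 : (1 : ℝ) ≤ x s(i, j) := by
        have h3 := hxy i j hadj
        have h4 := (hy01 j i).1
        rw [hy1] at h3
        linarith
      have h2 := (hx01 s(i, j) (by simpa using hadj)).2
      linarith
    have : (fromX G x).Adj i j := ⟨hadj, hx1⟩
    have hiS : (fromX G x).Reachable (r l) i := by
      simpa [hS] using hi
    have : j ∈ S := by
      simp only [hS, Finset.mem_filter, Finset.mem_univ, true_and]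
      exact hiS.trans this.reachable
    simp only [Finset.mem_compl] at hj
    exact hj this
  -- hence T k ∩ S = T k, i.e. T k ⊆ S
  have hTS : T k ∩ S = T k := by
    by_contra hne
    have h1 := hcut k S hne
    rw [hcut0] at h1
    have h2 : (1 : ℝ) ≤ ∑ l' ∈ (Finset.Iic k).filter (fun l' => r l' ∈ S), z l' k := by
      rw [← hzl1]
      refine Finset.single_le_sum (f := fun l' => z l' k) (fun l' hl' => ?_)
        (by simp only [Finset.mem_filter, Finset.mem_Iic]; exact ⟨hl, hrlS⟩)
      simp only [Finset.mem_filter, Finset.mem_Iic] at hl'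
      exact (hz01 l' k hl'.1).1
    linarith
  have hsub : T k ⊆ S := by
    intro v hv
    rw [← hTS] at hv
    exact (Finset.mem_inter.mp hv).2
  have hr : (fromX G x).Reachable (r l) (r k) := by
    have := hsub (hroot k)
    simpa [hS] using this
  have htr : (fromX G x).Reachable (r l) t := by
    have := hsub ht
    simpa [hS] using this
  exact hr.symm.trans htr
end
end

section
/- For every instance (G, T^1,…,T^K, c) of the Steiner Forest problem, Proj_x(𝔏^{edc}) ⊆ Proj_x(𝔏^{dc}); moreover there exists an instance for which the containment is strict, i.e. Proj_x(𝔏^{dc}) ⊋ Proj_x(𝔏^{edc}). -/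
open Finset
open scoped Classical

noncomputable section

variable {V : Type} [Fintype V] [DecidableEq V]

def netOut (ν : V → V → ℝ) (v : V) : ℝ := (∑ j, ν v j) - ∑ j, ν j v

lemma sum_netOut (ν : V → V → ℝ) (S : Finset V) :
    ∑ v ∈ S, netOut ν v = acutOut ν S - acutOut (fun i j => ν j i) S := by
  have key : ∑ v ∈ S, ∑ j ∈ S, ν v j = ∑ v ∈ S, ∑ j ∈ S, ν j v := Finset.sum_comm
  calc ∑ v ∈ S, netOut ν v
      = ∑ v ∈ S, ((∑ j ∈ S, ν v j + ∑ j ∈ Sᶜ, ν v j)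
          - (∑ j ∈ S, ν j v + ∑ j ∈ Sᶜ, ν j v)) := by
        refine Finset.sum_congr rfl fun v _ => ?_
        unfold netOut
        rw [Finset.sum_add_sum_compl, Finset.sum_add_sum_compl]
    _ = ((∑ v ∈ S, ∑ j ∈ S, ν v j) + (∑ v ∈ S, ∑ j ∈ Sᶜ, ν v j))
        - ((∑ v ∈ S, ∑ j ∈ S, ν j v) + (∑ v ∈ S, ∑ j ∈ Sᶜ, ν j v)) := by
        rw [Finset.sum_sub_distrib, Finset.sum_add_distrib, Finset.sum_add_distrib]
    _ = acutOut ν S - acutOut (fun i j => ν j i) S := by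
        rw [key]; unfold acutOut; ring

def upd (ν : V → V → ℝ) (p q : V) (δ : ℝ) : V → V → ℝ :=
  fun i j => if i = p ∧ j = q then ν i j + δ else ν i j

lemma upd_netOut (ν : V → V → ℝ) (p q : V) (δ : ℝ) (v : V) :
    netOut (upd ν p q δ) v =
      netOut ν v + δ * ((if v = p then 1 else 0) - (if v = q then 1 else 0)) := by
  unfold netOut upd
  have hrow : ∀ w : V, (∑ j, if w = p ∧ j = q then ν w j + δ else ν w j)
      = (∑ j, ν w j) + (if w = p then δ else 0) := by
    intro w
    have : ∀ j, (if w = p ∧ j = q then ν w j + δ else ν w j)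
        = ν w j + (if w = p ∧ j = q then δ else 0) := by
      intro j; split <;> simp
    rw [Finset.sum_congr rfl fun j _ => this j, Finset.sum_add_distrib]
    congr 1
    by_cases hw : w = p
    · simp [hw]
    · simp [hw]
  have hcol : (∑ j, if j = p ∧ v = q then ν j v + δ else ν j v)
      = (∑ j, ν j v) + (if v = q then δ else 0) := by
    have : ∀ j, (if j = p ∧ v = q then ν j v + δ else ν j v)
        = ν j v + (if j = p ∧ v = q then δ else 0) := by
      intro j; split <;> simp
    rw [Finset.sum_congr rfl fun j _ => this j, Finset.sum_add_distrib]
    congr 1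
    by_cases hv : v = q
    · simp [hv]
    · simp [hv]
  rw [hrow, hcol]
  have ep : (if v = p then δ else 0) = δ * (if v = p then (1:ℝ) else 0) := by split <;> ring
  have eq' : (if v = q then δ else 0) = δ * (if v = q then (1:ℝ) else 0) := by split <;> ring
  rw [ep, eq']; ring

lemma augment (y ν : V → V → ℝ) (hν : ∀ i j, 0 ≤ ν i j ∧ ν i j ≤ y i j) (w u : V)
    (h : Relation.ReflTransGen (fun i j => ν i j < y i j ∨ 0 < ν j i) u w) :
    ∃ ε > (0:ℝ), ∃ C > (0:ℝ), ∀ δ : ℝ, 0 < δ → δ ≤ ε →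
      ∃ ν' : V → V → ℝ, (∀ i j, 0 ≤ ν' i j ∧ ν' i j ≤ y i j) ∧
        (∀ i j, |ν' i j - ν i j| ≤ C * δ) ∧
        (∀ v, netOut ν' v = netOut ν v +
          δ * ((if v = u then 1 else 0) - (if v = w then 1 else 0))) := by
  induction h using Relation.ReflTransGen.head_induction_on with
  | refl =>
    refine ⟨1, one_pos, 1, one_pos, fun δ hδ _ => ⟨ν, hν, ?_, ?_⟩⟩
    · intro i j; simp; positivity
    · intro v; ring
  | head hac hcw ih =>
    rename_i a c
    obtain ⟨ε, hε, C, hC, hmk⟩ := ih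
    rcases hac with hac | hac
    · -- push forward on arc (a,c)
      set m : ℝ := y a c - ν a c with hm
      have hmpos : 0 < m := by simp [hm]; linarith
      refine ⟨min ε (m / (2 * (C + 1))), by positivity, C + 1, by positivity,
        fun δ hδ hδle => ?_⟩
      obtain ⟨ν₁, hf₁, hcl₁, hsh₁⟩ := hmk δ hδ (le_trans hδle (min_le_left _ _))
      have hδm : (C + 1) * δ ≤ m / 2 := by
        have h2 : δ ≤ m / (2 * (C + 1)) := le_trans hδle (min_le_right _ _)
        calc (C + 1) * δ ≤ (C + 1) * (m / (2 * (C + 1))) := by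
              apply mul_le_mul_of_nonneg_left h2; positivity
          _ = m / 2 := by field_simp
      refine ⟨upd ν₁ a c δ, ?_, ?_, ?_⟩
      · intro i j
        unfold upd
        split
        · rename_i hij
          obtain ⟨rfl, rfl⟩ := hij
          constructor
          · have := (hf₁ i j).1; linarith
          · have := (hcl₁ i j)
            have h3 : ν₁ i j - ν i j ≤ C * δ := le_trans (le_abs_self _) this
            nlinarith [hδm, hδ, hC]
        · exact hf₁ i j
      · intro i j
        unfold upd
        split
        · have := hcl₁ i j
          have h4 : |ν₁ i j + δ - ν i j| ≤ |ν₁ i j - ν i j| + |δ| := by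
            have := abs_add_le (ν₁ i j - ν i j) δ
            rw [show ν₁ i j + δ - ν i j = (ν₁ i j - ν i j) + δ by ring]; exact this
          rw [abs_of_pos hδ] at h4
          nlinarith [hδ.le]
        · have := hcl₁ i j
          nlinarith [hδ.le, hC.le, abs_nonneg (ν₁ i j - ν i j)]
      · intro v
        rw [upd_netOut, hsh₁ v]
        ring
    · -- push backward: decrease ν c a
      set m : ℝ := ν c a with hm
      have hmpos : 0 < m := hac
      refine ⟨min ε (m / (2 * (C + 1))), by positivity, C + 1, by positivity,
        fun δ hδ hδle => ?_⟩
      obtain ⟨ν₁, hf₁, hcl₁, hsh₁⟩ := hmk δ hδ (le_trans hδle (min_le_left _ _))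
      have hδm : (C + 1) * δ ≤ m / 2 := by
        have h2 : δ ≤ m / (2 * (C + 1)) := le_trans hδle (min_le_right _ _)
        calc (C + 1) * δ ≤ (C + 1) * (m / (2 * (C + 1))) := by
              apply mul_le_mul_of_nonneg_left h2; positivity
          _ = m / 2 := by field_simp
      refine ⟨upd ν₁ c a (-δ), ?_, ?_, ?_⟩
      · intro i j
        unfold upd
        split
        · rename_i hij
          obtain ⟨rfl, rfl⟩ := hij
          constructor
          · have := hcl₁ i j
            have h3 : ν i j - ν₁ i j ≤ C * δ := by
              have h5 : |ν i j - ν₁ i j| ≤ C * δ := by rw [abs_sub_comm]; exact this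
              exact le_trans (le_abs_self _) h5
            nlinarith [hδm, hδ, hC]
          · have := (hf₁ i j).2; linarith
        · exact hf₁ i j
      · intro i j
        unfold upd
        split
        · have := hcl₁ i j
          have h4 : |ν₁ i j + -δ - ν i j| ≤ |ν₁ i j - ν i j| + |(-δ)| := by
            have := abs_add_le (ν₁ i j - ν i j) (-δ)
            rw [show ν₁ i j + -δ - ν i j = (ν₁ i j - ν i j) + -δ by ring]; exact this
          rw [abs_neg, abs_of_pos hδ] at h4
          nlinarith [hδ.le]
        · have := hcl₁ i j
          nlinarith [hδ.le, hC.le, abs_nonneg (ν₁ i j - ν i j)]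
      · intro v
        rw [upd_netOut, hsh₁ v]
        ring

theorem gale (y : V → V → ℝ) (hy : ∀ i j, 0 ≤ y i j) (b : V → ℝ)
    (hb : ∑ v, b v = 0)
    (hcut : ∀ S : Finset V, ∑ v ∈ S, b v ≤ acutOut y S) :
    ∃ ν : V → V → ℝ, (∀ i j, 0 ≤ ν i j ∧ ν i j ≤ y i j) ∧ ∀ v, netOut ν v = b v := by
  classical
  set P : Set (V → V → ℝ) := {ν | ∀ i j, ν i j ∈ Set.Icc 0 (y i j)} with hP
  have hPc : IsCompact P := by
    have : P = Set.pi Set.univ (fun i => Set.pi Set.univ fun j => Set.Icc 0 (y i j)) := by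
      ext ν
      simp only [Set.mem_setOf_eq, Set.mem_univ_pi, Set.mem_Icc, hP]
    rw [this]
    exact isCompact_univ_pi fun i => isCompact_univ_pi fun j => isCompact_Icc
  have hPne : P.Nonempty := ⟨fun _ _ => 0, fun i j => Set.mem_Icc.mpr ⟨le_refl 0, hy i j⟩⟩
  set D : (V → V → ℝ) → ℝ := fun ν => ∑ v, |b v - netOut ν v| with hD
  have hDc : Continuous D := by
    apply continuous_finset_sum
    intro v _
    apply Continuous.abs
    apply Continuous.sub continuous_const
    unfold netOut
    apply Continuous.sub <;>
      exact continuous_finset_sum _ fun j _ => by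
        first
        | exact (continuous_apply j).comp (continuous_apply v)
        | exact (continuous_apply v).comp (continuous_apply j)
  obtain ⟨ν, hνP, hmin⟩ := hPc.exists_isMinOn hPne hDc.continuousOn
  have hfeas : ∀ i j, 0 ≤ ν i j ∧ ν i j ≤ y i j := fun i j => Set.mem_Icc.mp (hνP i j)
  by_cases hall : ∀ v, b v - netOut ν v = 0
  · exact ⟨ν, hfeas, fun v => by have := hall v; linarith⟩
  push_neg at hall
  obtain ⟨v₀, hv₀⟩ := hall
  exfalso
  set g : V → ℝ := fun v => b v - netOut ν v with hg
  have hnet0 : ∑ v, netOut ν v = 0 := by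
    unfold netOut
    rw [Finset.sum_sub_distrib]
    rw [Finset.sum_comm (s := Finset.univ) (t := Finset.univ) (f := fun v j => ν j v)]
    ring
  have hgsum : ∑ v, g v = 0 := by
    simp only [hg]
    rw [Finset.sum_sub_distrib, hb, hnet0]; ring
  have hu : ∃ u, 0 < g u := by
    by_contra hc
    push_neg at hc
    have : ∀ v ∈ Finset.univ, g v = 0 :=
      (Finset.sum_eq_zero_iff_of_nonpos (fun v _ => hc v)).mp hgsum
    exact hv₀ (this v₀ (Finset.mem_univ _))
  obtain ⟨u, hgu⟩ := hu
  set Res : V → V → Prop := fun i j => ν i j < y i j ∨ 0 < ν j i with hRes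
  set R : Finset V := Finset.univ.filter (fun w => Relation.ReflTransGen Res u w) with hR
  by_cases hAex : ∃ w ∈ R, g w < 0
  · obtain ⟨w, hwR, hgw⟩ := hAex
    have reach : Relation.ReflTransGen Res u w := (Finset.mem_filter.mp hwR).2
    obtain ⟨ε, hε, C, hC, hmk⟩ := augment y ν hfeas w u reach
    set δ : ℝ := min ε (min (g u) (-g w)) with hδdef
    have hδ : 0 < δ := lt_min hε (lt_min hgu (by linarith))
    obtain ⟨ν', hf', _, hshift⟩ := hmk δ hδ (min_le_left _ _)
    have hν'P : ν' ∈ P := fun i j => Set.mem_Icc.mpr (hf' i j)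
    have hne : u ≠ w := by rintro rfl; linarith
    have hδu : δ ≤ g u := le_trans (min_le_right _ _) (min_le_left _ _)
    have hδw : δ ≤ -g w := le_trans (min_le_right _ _) (min_le_right _ _)
    have hpt : ∀ v, |b v - netOut ν' v|
        = |b v - netOut ν v| - ((if v = u then δ else 0) + (if v = w then δ else 0)) := by
      intro v
      rw [hshift v]
      by_cases h1 : v = u
      · subst h1
        rw [if_pos rfl, if_neg hne, if_pos rfl, if_neg hne]
        have e1 : b v - (netOut ν v + δ * (1 - 0)) = g v - δ := by simp [hg]; ring
        rw [e1, abs_of_nonneg (by simp [hg] at hδu ⊢; linarith),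
          abs_of_nonneg (by linarith [hgu])]
        ring
      · by_cases h2 : v = w
        · subst h2
          rw [if_neg h1, if_pos rfl, if_neg h1, if_pos rfl]
          have e1 : b v - (netOut ν v + δ * (0 - 1)) = g v + δ := by simp [hg]; ring
          rw [e1, abs_of_nonpos (by simp [hg] at hδw ⊢; linarith),
            abs_of_nonpos (by linarith [hgw])]
          ring
        · rw [if_neg h1, if_neg h2, if_neg h1, if_neg h2]
          ring_nf
    have hDlt : D ν' < D ν := by
      simp only [hD]
      rw [Finset.sum_congr rfl fun v _ => hpt v]
      rw [Finset.sum_sub_distrib, Finset.sum_add_distrib]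
      rw [Finset.sum_ite_eq' Finset.univ u fun _ => δ, Finset.sum_ite_eq' Finset.univ w fun _ => δ]
      simp [hδ]
    exact absurd (hmin hν'P) (by simpa using not_le.mpr hDlt)
  · push_neg at hAex
    have huR : u ∈ R := Finset.mem_filter.mpr ⟨Finset.mem_univ _, Relation.ReflTransGen.refl⟩
    have hsumR : g u ≤ ∑ v ∈ R, g v := Finset.single_le_sum (fun v hv => hAex v hv) huR
    have hbdry : ∀ i ∈ R, ∀ j, j ∉ R → ν i j = y i j ∧ ν j i = 0 := by
      intro i hi j hj
      have hreach : Relation.ReflTransGen Res u i := (Finset.mem_filter.mp hi).2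
      have hnores : ¬ Res i j := by
        intro hres
        exact hj (Finset.mem_filter.mpr ⟨Finset.mem_univ _, hreach.tail hres⟩)
      simp only [hRes, not_or, not_lt] at hnores
      exact ⟨le_antisymm (hfeas i j).2 hnores.1, le_antisymm hnores.2 (hfeas j i).1⟩
    have hcR1 : acutOut ν R = acutOut y R := by
      unfold acutOut
      refine Finset.sum_congr rfl fun i hi => Finset.sum_congr rfl fun j hj => ?_
      exact (hbdry i hi j (Finset.mem_compl.mp hj)).1
    have hcR2 : acutOut (fun i j => ν j i) R = 0 := by
      unfold acutOut
      refine Finset.sum_eq_zero fun i hi => Finset.sum_eq_zero fun j hj => ?_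
      exact (hbdry i hi j (Finset.mem_compl.mp hj)).2
    have hnetR : ∑ v ∈ R, netOut ν v = acutOut y R := by
      rw [sum_netOut, hcR1, hcR2]; ring
    have hbR : ∑ v ∈ R, b v = (∑ v ∈ R, g v) + acutOut y R := by
      rw [← hnetR, ← Finset.sum_add_distrib]
      exact Finset.sum_congr rfl fun v _ => by simp [hg]
    have := hcut R
    rw [hbR] at this
    linarith

lemma part1 {V : Type} [Fintype V] [DecidableEq V] (G : SimpleGraph V) (K : ℕ)
    (T : Fin K → Finset V) (r : Fin K → V) (hrT : ∀ k, r k ∈ T k) :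
    {x : Sym2 V → ℝ | ∃ y z, memLedc G T r x y z} ⊆
      {x : Sym2 V → ℝ | ∃ y, memLdc G T r x y} := by
  rintro x ⟨y, z, hxb, hy0, hyb, hzb, h1, h2, h3, h4⟩
  -- the demand vector for tree k
  set b : Fin K → V → ℝ := fun k v =>
    (∑ l ∈ (Finset.Iio k).filter (fun l => r l = v), z l k) -
      (if v = r k then ∑ l ∈ Finset.Iio k, z l k else 0) with hbdef
  have key : ∀ (k : Fin K) (S : Finset V), ∑ v ∈ S, b k v =
      (∑ l ∈ (Finset.Iio k).filter (fun l => r l ∈ S), z l k) -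
        (if r k ∈ S then ∑ l ∈ Finset.Iio k, z l k else 0) := by
    intro k S
    simp only [hbdef]
    rw [Finset.sum_sub_distrib]
    congr 1
    · rw [← Finset.sum_fiberwise_of_maps_to (g := r)
        (t := S) (fun l hl => (Finset.mem_filter.mp hl).2)]
      refine Finset.sum_congr rfl fun v hv => ?_
      congr 1
      ext l
      simp only [Finset.mem_filter, Finset.mem_Iio]
      constructor
      · rintro ⟨hlk, hrl⟩; exact ⟨⟨hlk, hrl ▸ hv⟩, hrl⟩
      · rintro ⟨⟨hlk, _⟩, hrl⟩; exact ⟨hlk, hrl⟩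
    · rw [Finset.sum_ite_eq' S (r k) (fun _ => ∑ l ∈ Finset.Iio k, z l k)]
  have hzpos : ∀ (k : Fin K), ∀ l ∈ Finset.Iio k, 0 ≤ z l k := by
    intro k l hl
    exact (hzb l k (le_of_lt (Finset.mem_Iio.mp hl))).1
  have hcutnn : ∀ (S : Finset V), 0 ≤ acutOut y S := by
    intro S
    exact Finset.sum_nonneg fun i _ => Finset.sum_nonneg fun j _ => (hyb i j).1
  -- Gale feasibility for each k
  have H : ∀ k : Fin K, ∃ ν : V → V → ℝ,
      (∀ i j, 0 ≤ ν i j ∧ ν i j ≤ y i j) ∧ ∀ v, netOut ν v = b k v := by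
    intro k
    apply gale y (fun i j => (hyb i j).1) (b k)
    · have := key k Finset.univ
      rw [Finset.filter_true_of_mem (fun l _ => Finset.mem_univ (r l)),
        if_pos (Finset.mem_univ _)] at this
      rw [this]; ring
    · intro S
      rw [key k S]
      by_cases hrk : r k ∈ S
      · rw [if_pos hrk]
        have hsub : (∑ l ∈ (Finset.Iio k).filter (fun l => r l ∈ S), z l k)
            ≤ ∑ l ∈ Finset.Iio k, z l k :=
          Finset.sum_le_sum_of_subset_of_nonneg (Finset.filter_subset _ _)
            (fun l hl _ => hzpos k l hl)
        have := hcutnn S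
        linarith
      · rw [if_neg hrk]
        have hT : T k ∩ S ≠ T k := by
          intro hc
          apply hrk
          have : r k ∈ T k ∩ S := hc.symm ▸ hrT k
          exact (Finset.mem_inter.mp this).2
        have h1' := h1 k S hT
        have hfe : (Finset.Iic k).filter (fun l => r l ∈ S)
            = (Finset.Iio k).filter (fun l => r l ∈ S) := by
          ext l
          simp only [Finset.mem_filter, Finset.mem_Iic, Finset.mem_Iio]
          constructor
          · rintro ⟨hle, hm⟩
            refine ⟨lt_of_le_of_ne hle ?_, hm⟩
            rintro rfl; exact hrk hm
          · rintro ⟨hlt, hm⟩; exact ⟨le_of_lt hlt, hm⟩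
        rw [hfe] at h1'
        linarith
  choose ν hν1 hν2 using H
  refine ⟨fun k i j => y i j - ν k i j + ν k j i, hxb, fun k => ⟨?_, ?_, ?_, ?_⟩⟩
  · -- zero on non-adjacent
    intro i j hadj
    have hij : y i j = 0 := hy0 i j hadj
    have hji : y j i = 0 := hy0 j i (fun h => hadj h.symm)
    have n1 := hν1 k i j
    have n2 := hν1 k j i
    rw [hij] at n1; rw [hji] at n2
    simp only
    linarith [n1.1, n1.2, n2.1, n2.2, hij]
  · -- bounds
    intro i j
    have n1 := hν1 k i j
    have n2 := hν1 k j i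
    constructor
    · simp only; linarith [n1.2, n2.1]
    · simp only
      by_cases hadj : G.Adj i j
      · have hcap := h4 i j hadj
        have hx1 := (hxb (s(i, j)) (G.mem_edgeSet.mpr hadj)).2
        linarith [n1.1, n2.2, (hyb i j).1, (hyb j i).1]
      · have hij : y i j = 0 := hy0 i j hadj
        have hji : y j i = 0 := hy0 j i (fun h => hadj h.symm)
        rw [hij] at n1; rw [hji] at n2
        linarith [n1.1, n1.2, n2.1, n2.2]
  · -- cut constraints
    intro S hrkS ⟨t, htT, htS⟩
    have hT : T k ∩ S ≠ T k := by
      intro hc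
      apply htS
      have : t ∈ T k ∩ S := hc.symm ▸ htT
      exact (Finset.mem_inter.mp this).2
    have h1' := h1 k S hT
    have hsplitIic : (Finset.Iic k).filter (fun l => r l ∈ S)
        = insert k ((Finset.Iio k).filter (fun l => r l ∈ S)) := by
      ext l
      simp only [Finset.mem_filter, Finset.mem_Iic, Finset.mem_Iio, Finset.mem_insert]
      constructor
      · rintro ⟨hle, hm⟩
        by_cases hlk : l = k
        · exact Or.inl hlk
        · exact Or.inr ⟨lt_of_le_of_ne hle hlk, hm⟩
      · rintro (rfl | ⟨hlt, hm⟩)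
        · exact ⟨le_refl _, hrkS⟩
        · exact ⟨le_of_lt hlt, hm⟩
    have hknotmem : k ∉ (Finset.Iio k).filter (fun l => r l ∈ S) := by
      simp [Finset.mem_filter]
    rw [hsplitIic, Finset.sum_insert hknotmem] at h1'
    have hIic2 : Finset.Iic k = insert k (Finset.Iio k) := by
      ext l
      simp only [Finset.mem_Iic, Finset.mem_Iio, Finset.mem_insert]
      constructor
      · intro hle
        by_cases hlk : l = k
        · exact Or.inl hlk
        · exact Or.inr (lt_of_le_of_ne hle hlk)
      · rintro (rfl | hlt)
        · exact le_refl _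
        · exact le_of_lt hlt
    have h2' := h2 k
    rw [hIic2, Finset.sum_insert (by simp)] at h2'
    have hlin : acutOut (fun i j => y i j - ν k i j + ν k j i) S
        = acutOut y S - (acutOut (ν k) S - acutOut (fun i j => ν k j i) S) := by
      unfold acutOut
      simp only [Finset.sum_add_distrib, Finset.sum_sub_distrib]
      ring
    have hnet : acutOut (ν k) S - acutOut (fun i j => ν k j i) S = ∑ v ∈ S, b k v := by
      rw [← sum_netOut]
      exact Finset.sum_congr rfl fun v _ => hν2 k v
    rw [hlin, hnet, key k S, if_pos hrkS]
    linarith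
  · -- capacity
    intro i j hadj
    have := h4 i j hadj
    simp only
    linarith

lemma acutOut_eq_if (g : V → V → ℝ) (S : Finset V) :
    acutOut g S = ∑ i, ∑ j, if i ∈ S ∧ j ∉ S then g i j else 0 := by
  symm
  have h1 : ∀ i, (∑ j, if i ∈ S ∧ j ∉ S then g i j else 0)
      = if i ∈ S then ∑ j ∈ Sᶜ, g i j else 0 := by
    intro i
    by_cases hi : i ∈ S
    · simp only [hi, true_and, if_true]
      rw [← Finset.sum_filter]
      congr 1
      ext j; simp
    · simp [hi]
  calc ∑ i, ∑ j, (if i ∈ S ∧ j ∉ S then g i j else 0)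
      = ∑ i, (if i ∈ S then ∑ j ∈ Sᶜ, g i j else 0) := Finset.sum_congr rfl fun i _ => h1 i
    _ = acutOut g S := by rw [Finset.sum_ite_mem, Finset.univ_inter]; rfl

def G4 : SimpleGraph (Fin 4) := SimpleGraph.fromRel (fun i j => j.val = (i.val + 1) % 4)

def T4 : Fin 2 → Finset (Fin 4) := ![{0, 2}, {1, 3}]

def r4 : Fin 2 → Fin 4 := ![0, 1]

def x4 : Sym2 (Fin 4) → ℝ := fun e => if e ∈ G4.edgeSet then 1/2 else 0

def yw : Fin 2 → Fin 4 → Fin 4 → ℝ := fun k i j =>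
  if k = 0 then
    (if (i = 0 ∧ j = 1) ∨ (i = 1 ∧ j = 2) ∨ (i = 0 ∧ j = 3) ∨ (i = 3 ∧ j = 2)
      then 1/2 else 0)
  else
    (if (i = 1 ∧ j = 2) ∨ (i = 2 ∧ j = 3) ∨ (i = 1 ∧ j = 0) ∨ (i = 0 ∧ j = 3)
      then 1/2 else 0)

lemma fv0 : ((0:Fin 4):ℕ) = 0 := rfl
lemma fv1 : ((1:Fin 4):ℕ) = 1 := rfl
lemma fv2 : ((2:Fin 4):ℕ) = 2 := rfl
lemma fv3 : ((3:Fin 4):ℕ) = 3 := rfl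
lemma fw0 : ((0:Fin 2):ℕ) = 0 := rfl
lemma fw1 : ((1:Fin 2):ℕ) = 1 := rfl

lemma G4_adj_iff (i j : Fin 4) :
    G4.Adj i j ↔ i ≠ j ∧ (j.val = (i.val + 1) % 4 ∨ i.val = (j.val + 1) % 4) :=
  SimpleGraph.fromRel_adj _ i j

lemma subsets4 (S : Finset (Fin 4)) :
    S = ∅ ∨ S = {0} ∨ S = {1} ∨ S = {2} ∨ S = {3} ∨
    S = {0,1} ∨ S = {0,2} ∨ S = {0,3} ∨ S = {1,2} ∨ S = {1,3} ∨ S = {2,3} ∨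
    S = {0,1,2} ∨ S = {0,1,3} ∨ S = {0,2,3} ∨ S = {1,2,3} ∨ S = {0,1,2,3} := by
  revert S; decide

lemma x4_edge (i j : Fin 4) (h : G4.Adj i j) : x4 s(i, j) = 1/2 := by
  unfold x4
  rw [if_pos (G4.mem_edgeSet.mpr h)]

lemma dc_mem : memLdc G4 T4 r4 x4 yw := by
  constructor
  · intro e he
    unfold x4
    rw [if_pos he]
    norm_num
  · intro k
    refine ⟨?_, ?_, ?_, ?_⟩
    · intro i j hadj
      rw [G4_adj_iff] at hadj
      fin_cases k <;> fin_cases i <;> fin_cases j <;>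
        first
          | (exact absurd (by decide) hadj)
          | (simp [yw, Fin.ext_iff, fv0, fv1, fv2, fv3, fw0, fw1])
    · intro i j
      constructor <;> (unfold yw) <;> split <;> split <;> norm_num
    · intro S hr ht
      fin_cases k <;>
        rcases subsets4 S with rfl|rfl|rfl|rfl|rfl|rfl|rfl|rfl|rfl|rfl|rfl|rfl|rfl|rfl|rfl|rfl <;>
        first
          | exact absurd hr (by decide)
          | exact absurd ht (by decide)
          | (rw [acutOut_eq_if]; simp [Fin.sum_univ_four, yw, Fin.ext_iff, fv0, fv1, fv2, fv3, fw0, fw1, -Fin.val_eq_zero_iff]; try norm_num)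
    · intro i j hadj
      rw [x4_edge i j hadj]
      rw [G4_adj_iff] at hadj
      fin_cases k <;> fin_cases i <;> fin_cases j <;>
        first
          | (simp [yw, Fin.ext_iff, fv0, fv1, fv2, fv3, fw0, fw1])

lemma edc_not_mem : ¬ ∃ y z, memLedc G4 T4 r4 x4 y z := by
  rintro ⟨y, z, hxb, hy0, hyb, hzb, h1, h2, h3, h4⟩
  -- z facts
  have hz0 : z 0 0 = 1 := by
    have := h2 0
    rw [show (Finset.Iic (0 : Fin 2)) = {0} from by decide, Finset.sum_singleton] at this
    exact this
  have hz1 : z 0 1 + z 1 1 = 1 := by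
    have := h2 1
    rw [show (Finset.Iic (1 : Fin 2)) = {0, 1} from by decide,
      Finset.sum_insert (by decide), Finset.sum_singleton] at this
    exact this
  -- vanishing diagonals
  have h02 : y 0 2 = 0 := hy0 0 2 (by rw [G4_adj_iff]; decide)
  have h20 : y 2 0 = 0 := hy0 2 0 (by rw [G4_adj_iff]; decide)
  have h13 : y 1 3 = 0 := hy0 1 3 (by rw [G4_adj_iff]; decide)
  have h31 : y 3 1 = 0 := hy0 3 1 (by rw [G4_adj_iff]; decide)
  -- cut constraints
  have hA := h1 0 {0} (by decide)
  rw [show (Finset.Iic (0 : Fin 2)).filter (fun l => r4 l ∈ ({0} : Finset (Fin 4))) = {0}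
      from by decide, Finset.sum_singleton, acutOut_eq_if] at hA
  simp [Fin.sum_univ_four] at hA
  have hB := h1 0 {0, 1, 3} (by decide)
  rw [show (Finset.Iic (0 : Fin 2)).filter (fun l => r4 l ∈ ({0,1,3} : Finset (Fin 4))) = {0}
      from by decide, Finset.sum_singleton, acutOut_eq_if] at hB
  simp [Fin.sum_univ_four] at hB
  have hC := h1 1 {0, 1, 2} (by decide)
  rw [show (Finset.Iic (1 : Fin 2)).filter (fun l => r4 l ∈ ({0,1,2} : Finset (Fin 4))) = {0, 1}
      from by decide, Finset.sum_insert (by decide), Finset.sum_singleton, acutOut_eq_if] at hC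
  simp [Fin.sum_univ_four] at hC
  -- capacities
  have hc01 := h4 0 1 (by rw [G4_adj_iff]; decide)
  have hc12 := h4 1 2 (by rw [G4_adj_iff]; decide)
  have hc23 := h4 2 3 (by rw [G4_adj_iff]; decide)
  have hc03 := h4 0 3 (by rw [G4_adj_iff]; decide)
  rw [x4_edge 0 1 (by rw [G4_adj_iff]; decide)] at hc01
  rw [x4_edge 1 2 (by rw [G4_adj_iff]; decide)] at hc12
  rw [x4_edge 2 3 (by rw [G4_adj_iff]; decide)] at hc23
  rw [x4_edge 0 3 (by rw [G4_adj_iff]; decide)] at hc03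
  have n01 := (hyb 0 1).1
  have n10 := (hyb 1 0).1
  have n12 := (hyb 1 2).1
  have n21 := (hyb 2 1).1
  have n23 := (hyb 2 3).1
  have n32 := (hyb 3 2).1
  have n03 := (hyb 0 3).1
  have n30 := (hyb 3 0).1
  linarith

/-- For every Steiner Forest instance
`Proj_x(𝔏^{edc}) ⊆ Proj_x(𝔏^{dc})`, and there is an instance where the
containment is strict. -/
theorem proj_Ledc_subset_proj_Ldc_and_exists_strict :
    (∀ (V : Type) [Fintype V] [DecidableEq V] (G : SimpleGraph V) (K : ℕ)
        (T : Fin K → Finset V) (r : Fin K → V),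
      (∀ k, r k ∈ T k) → (∀ k l : Fin K, k ≠ l → Disjoint (T k) (T l)) →
      {x : Sym2 V → ℝ | ∃ y z, memLedc G T r x y z} ⊆
        {x : Sym2 V → ℝ | ∃ y, memLdc G T r x y}) ∧
    (∃ (n : ℕ) (G : SimpleGraph (Fin n)) (K : ℕ)
        (T : Fin K → Finset (Fin n)) (r : Fin K → Fin n),
      (∀ k, r k ∈ T k) ∧ (∀ k l : Fin K, k ≠ l → Disjoint (T k) (T l)) ∧
      {x : Sym2 (Fin n) → ℝ | ∃ y z, memLedc G T r x y z} ⊂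
        {x : Sym2 (Fin n) → ℝ | ∃ y, memLdc G T r x y}) := by
  constructor
  · intro V _ _ G K T r hrT _
    exact part1 G K T r hrT
  · refine ⟨4, G4, 2, T4, r4, by decide, ?_, ?_⟩
    · intro k l hkl
      rw [Finset.disjoint_left]
      intro a ha hb
      fin_cases k <;> fin_cases l <;> fin_cases a <;> simp_all [T4]
    · rw [Set.ssubset_iff_of_subset (part1 G4 2 T4 r4 (by decide))]
      exact ⟨x4, ⟨yw, dc_mem⟩, fun h => edc_not_mem h⟩
end
end

section
/- The strengthened extended directed cut formulation IPsedc models the Steiner Forest problem correctly: (i) for every feasible Steiner Forest F = (V_F, E_F) there exists an integer point (x,y,z) ∈ 𝔏^{sedc} with Σ_{e∈E} c_e x_e = Σ_{e∈E_F} c_e; and (ii) for every integer point (x,y,z) ∈ 𝔏^{sedc}, the edge set Ẽ := { e ∈ E : x_e = 1 } contains, for each k ∈ [K], an s–t path in (V, Ẽ) for all s,t ∈ T^k, and its cost Σ_{e∈Ẽ} c_e is at most Σ_{e∈E} c_e x_e. -/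
open Finset
open scoped Classical

noncomputable section

variable {V : Type} [Fintype V] [DecidableEq V]

/-- Membership in the strengthened extended directed cut polytope `𝔏^{sedc}`. -/
def memLsedc (G : SimpleGraph V) {K : ℕ} (T : Fin K → Finset V) (r : Fin K → V)
    (x : Sym2 V → ℝ) (y : Fin K → V → V → ℝ) (z : Fin K → Fin K → ℝ) : Prop :=
  -- variable bounds
  (∀ e ∈ G.edgeSet, 0 ≤ x e ∧ x e ≤ 1) ∧
  (∀ (k : Fin K) (i j : V), ¬ G.Adj i j → y k i j = 0) ∧
  (∀ (k : Fin K) (i j : V), 0 ≤ y k i j ∧ y k i j ≤ 1) ∧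
  (∀ k l : Fin K, k ≤ l → 0 ≤ z k l ∧ z k l ≤ 1) ∧
  -- (1)  y^k(δ⁺(S)) ≥ z_{kℓ} whenever r^k ∈ S and S ∩ T^ℓ ≠ T^ℓ
  (∀ k l : Fin K, k ≤ l → ∀ S : Finset V, r k ∈ S → T l ∩ S ≠ T l →
    z k l ≤ acutOut (y k) S) ∧
  -- (2)  Σ_{ℓ ≤ k} z_{ℓk} = 1
  (∀ k : Fin K, (∑ l ∈ Finset.Iic k, z l k) = 1) ∧
  -- (3)  z_{kk} ≥ z_{kℓ} for k ∈ [K] \ {1, K} and ℓ ≥ k + 1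
  (∀ k l : Fin K, k.val ≠ 0 → k.val ≠ K - 1 → k < l → z k l ≤ z k k) ∧
  -- (4)  Σ_k (y^k_{ij} + y^k_{ji}) ≤ x_{ij}
  (∀ i j : V, G.Adj i j → (∑ k : Fin K, (y k i j + y k j i)) ≤ x s(i, j))

/-- All components of a point of `𝔏^{sedc}` lie in `{0,1}`. -/
def LsedcIntegral (G : SimpleGraph V) {K : ℕ}
    (x : Sym2 V → ℝ) (y : Fin K → V → V → ℝ) (z : Fin K → Fin K → ℝ) : Prop :=
  (∀ e ∈ G.edgeSet, x e = 0 ∨ x e = 1) ∧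
  (∀ (k : Fin K) (i j : V), y k i j = 0 ∨ y k i j = 1) ∧
  (∀ k l : Fin K, k ≤ l → (z k l = 0 ∨ z k l = 1))

set_option linter.unusedSectionVars false

lemma acutOut_nonneg (g : V → V → ℝ) (hg : ∀ i j, 0 ≤ g i j) (S : Finset V) :
    0 ≤ acutOut g S :=
  Finset.sum_nonneg fun i _ => Finset.sum_nonneg fun j _ => hg i j

lemma le_acutOut_s14 (g : V → V → ℝ) (hg : ∀ i j, 0 ≤ g i j) (S : Finset V) {i j : V}
    (hi : i ∈ S) (hj : j ∉ S) : g i j ≤ acutOut g S := by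
  calc g i j ≤ ∑ b ∈ Sᶜ, g i b :=
        Finset.single_le_sum (fun b _ => hg i b) (Finset.mem_compl.2 hj)
    _ ≤ acutOut g S :=
        Finset.single_le_sum (fun a _ => Finset.sum_nonneg fun b _ => hg a b) hi

lemma one_le_acutOut_of_rtg (g : V → V → ℝ) (hg : ∀ i j, 0 ≤ g i j) (S : Finset V) {a b : V}
    (h : Relation.ReflTransGen (fun u v => g u v = 1) a b) (ha : a ∈ S) :
    b ∉ S → 1 ≤ acutOut g S := by
  induction h with
  | refl => intro hb; exact absurd ha hb
  | @tail m b h1 h2 ih =>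
    intro hb
    by_cases hm : m ∈ S
    · have := le_acutOut_s14 g hg S hm hb
      rwa [h2] at this
    · exact ih hm

/-- One step of the canonical orientation of a forest away from `rt`. -/
def stepRel (H : SimpleGraph V) (rt : V) (a b : V) : Prop :=
  H.Adj a b ∧ ∃ p : H.Walk rt a, p.IsPath ∧ b ∉ p.support

lemma rtg_of_path (H : SimpleGraph V) (rt : V) :
    ∀ {u v : V} (q : H.Walk u v) (p0 : H.Walk rt u),
      (p0.append q).IsPath → Relation.ReflTransGen (stepRel H rt) rt u →
      Relation.ReflTransGen (stepRel H rt) rt v := by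
  intro u v q
  induction q with
  | nil => intro p0 _ h; exact h
  | @cons u w v hadj q ih =>
    intro p0 hp hr
    have hp0 : p0.IsPath := hp.of_append_left
    have hwns : w ∉ p0.support := by
      have hnd : (p0.support ++ (SimpleGraph.Walk.cons hadj q).support.tail).Nodup := by
        rw [← SimpleGraph.Walk.support_append]
        exact (SimpleGraph.Walk.isPath_def _).1 hp
      intro hmem
      have hw : w ∈ (SimpleGraph.Walk.cons hadj q).support.tail := by
        simp [SimpleGraph.Walk.support_cons, SimpleGraph.Walk.start_mem_support]
      exact (List.disjoint_of_nodup_append hnd) hmem hw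
    have hstep : stepRel H rt u w := ⟨hadj, p0, hp0, hwns⟩
    have hassoc : (p0.concat hadj).append q = p0.append (SimpleGraph.Walk.cons hadj q) := by
      rw [SimpleGraph.Walk.concat_eq_append, ← SimpleGraph.Walk.append_assoc,
        SimpleGraph.Walk.cons_nil_append]
    exact ih (p0.concat hadj) (by rw [hassoc]; exact hp) (hr.tail hstep)

set_option linter.unusedSectionVars false

/-- The representative (minimal index) of the component of `r k`. -/
def repIdx (H : SimpleGraph V) {K : ℕ} (r : Fin K → V) (k : Fin K) : Fin K :=
  (Finset.univ.filter fun l => H.Reachable (r l) (r k)).min'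
    ⟨k, Finset.mem_filter.2 ⟨Finset.mem_univ k, SimpleGraph.Reachable.refl _⟩⟩

lemma repIdx_le (H : SimpleGraph V) {K : ℕ} (r : Fin K → V) (k : Fin K) :
    repIdx H r k ≤ k := by
  unfold repIdx
  exact Finset.min'_le (Finset.univ.filter fun l => H.Reachable (r l) (r k)) k
    (Finset.mem_filter.2 ⟨Finset.mem_univ k, SimpleGraph.Reachable.refl _⟩)

lemma repIdx_reach (H : SimpleGraph V) {K : ℕ} (r : Fin K → V) (k : Fin K) :
    H.Reachable (r (repIdx H r k)) (r k) := by
  unfold repIdx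
  exact (Finset.mem_filter.1 (Finset.min'_mem (Finset.univ.filter fun l => H.Reachable (r l) (r k))
    ⟨k, Finset.mem_filter.2 ⟨Finset.mem_univ k, SimpleGraph.Reachable.refl _⟩⟩)).2

lemma repIdx_congr (H : SimpleGraph V) {K : ℕ} (r : Fin K → V) {k k' : Fin K}
    (h : H.Reachable (r k) (r k')) : repIdx H r k = repIdx H r k' := by
  unfold repIdx
  congr 1
  ext l
  simp only [Finset.mem_filter, Finset.mem_univ, true_and]
  exact ⟨fun hl => hl.trans h, fun hl => hl.trans h.symm⟩

lemma repIdx_idem (H : SimpleGraph V) {K : ℕ} (r : Fin K → V) (k : Fin K) :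
    repIdx H r (repIdx H r k) = repIdx H r k :=
  repIdx_congr H r (repIdx_reach H r k)

/-- The canonical arc variables of a Steiner forest. -/
def ySF (H : SimpleGraph V) {K : ℕ} (r : Fin K → V) (k : Fin K) (i j : V) : ℝ :=
  if repIdx H r k = k ∧ stepRel H (r k) i j then 1 else 0

lemma ySF_mem (H : SimpleGraph V) {K : ℕ} (r : Fin K → V) (k : Fin K) (i j : V) :
    ySF H r k i j = 0 ∨ ySF H r k i j = 1 := by
  unfold ySF; split <;> simp

lemma ySF_nonneg (H : SimpleGraph V) {K : ℕ} (r : Fin K → V) (k : Fin K) (i j : V) :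
    0 ≤ ySF H r k i j := by
  unfold ySF; split <;> norm_num

lemma ySF_le_one (H : SimpleGraph V) {K : ℕ} (r : Fin K → V) (k : Fin K) (i j : V) :
    ySF H r k i j ≤ 1 := by
  unfold ySF; split <;> norm_num

lemma ySF_eq_one_iff (H : SimpleGraph V) {K : ℕ} (r : Fin K → V) (k : Fin K) (i j : V) :
    ySF H r k i j = 1 ↔ (repIdx H r k = k ∧ stepRel H (r k) i j) := by
  unfold ySF; split <;> simp_all

lemma ySF_antisym (H : SimpleGraph V) (hac : H.IsAcyclic) {K : ℕ} (r : Fin K → V)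
    (k : Fin K) {i j : V} (h1 : ySF H r k i j = 1) : ySF H r k j i = 0 := by
  rcases ySF_mem H r k j i with h | h2
  · exact h
  exfalso
  obtain ⟨-, hadj, p, hp, hjp⟩ := (ySF_eq_one_iff H r k i j).1 h1
  obtain ⟨-, hadj', q, hq, hiq⟩ := (ySF_eq_one_iff H r k j i).1 h2
  have hpc : (p.concat hadj).IsPath := by
    rw [SimpleGraph.Walk.isPath_def, SimpleGraph.Walk.support_concat,
      List.nodup_append']
    exact ⟨(SimpleGraph.Walk.isPath_def _).1 hp, List.nodup_singleton j,
      by simpa using fun hmem => hjp hmem⟩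
  have huniq := SimpleGraph.isAcyclic_iff_path_unique.1 hac
    (⟨p.concat hadj, hpc⟩ : H.Path (r k) j) ⟨q, hq⟩
  have : i ∈ q.support := by
    have hi : i ∈ (p.concat hadj).support := by
      rw [SimpleGraph.Walk.support_concat]
      exact List.mem_append_left _ (SimpleGraph.Walk.end_mem_support p)
    rw [Subtype.mk_eq_mk] at huniq
    rwa [huniq] at hi
  exact hiq this

lemma ySF_reach (H : SimpleGraph V) {K : ℕ} (r : Fin K → V) {k : Fin K} {i j : V}
    (h : ySF H r k i j = 1) : H.Reachable (r k) i ∧ repIdx H r k = k := by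
  obtain ⟨hrep, -, p, -, -⟩ := (ySF_eq_one_iff H r k i j).1 h
  exact ⟨⟨p⟩, hrep⟩

lemma ySF_unique (H : SimpleGraph V) {K : ℕ} (r : Fin K → V) {k k' : Fin K} {i j i' j' : V}
    (h : ySF H r k i j = 1) (h' : ySF H r k' i' j' = 1) (hr : H.Reachable i i') : k = k' := by
  obtain ⟨hk, hrepk⟩ := ySF_reach H r h
  obtain ⟨hk', hrepk'⟩ := ySF_reach H r h'
  have : H.Reachable (r k) (r k') := (hk.trans hr).trans hk'.symm
  rw [← hrepk, ← hrepk']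
  exact repIdx_congr H r this

lemma ySF_rtg (H : SimpleGraph V) {K : ℕ} (r : Fin K → V) {k : Fin K}
    (hrep : repIdx H r k = k) {t : V} (h : H.Reachable (r k) t) :
    Relation.ReflTransGen (fun a b => ySF H r k a b = 1) (r k) t := by
  obtain ⟨w⟩ := h
  have hrtg := rtg_of_path H (r k) w.bypass SimpleGraph.Walk.nil
    (by rw [SimpleGraph.Walk.nil_append]; exact w.bypass_isPath)
    Relation.ReflTransGen.refl
  refine Relation.ReflTransGen.mono (fun a b hab => ?_) _ _ hrtg
  exact (ySF_eq_one_iff H r k a b).2 ⟨hrep, hab⟩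


/-- The strengthened extended directed cut formulation IPsedc
models the Steiner Forest problem correctly. -/
theorem IPsedc_models_SteinerForest (G : SimpleGraph V) {K : ℕ}
    (T : Fin K → Finset V) (r : Fin K → V) (c : Sym2 V → ℝ)
    (hc : ∀ e ∈ G.edgeSet, 0 ≤ c e)
    (hroot : ∀ k, r k ∈ T k)
    (hdisj : ∀ k l : Fin K, k ≠ l → Disjoint (T k) (T l)) :
    -- (i) every feasible Steiner Forest yields an integer point of the same cost
    (∀ H : SimpleGraph V, IsSteinerForest G H T →
      ∃ (x : Sym2 V → ℝ) (y : Fin K → V → V → ℝ) (z : Fin K → Fin K → ℝ),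
        memLsedc G T r x y z ∧ LsedcIntegral G x y z ∧
        (∑ e ∈ G.edgeFinset, c e * x e) = (∑ e ∈ H.edgeFinset, c e)) ∧
    -- (ii) every integer point connects each terminal set, at no larger cost
    (∀ (x : Sym2 V → ℝ) (y : Fin K → V → V → ℝ) (z : Fin K → Fin K → ℝ),
      memLsedc G T r x y z → LsedcIntegral G x y z →
        (∀ k : Fin K, ∀ s ∈ T k, ∀ t ∈ T k, (fromX G x).Reachable s t) ∧
        (∑ e ∈ (fromX G x).edgeFinset, c e) ≤ (∑ e ∈ G.edgeFinset, c e * x e)) := by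
  classical
  constructor
  · -- Part (i)
    intro H hH
    obtain ⟨hle, hac, hconn⟩ := hH
    refine ⟨(fun e => if e ∈ H.edgeSet then 1 else 0), ySF H r,
      (fun k l => if k = repIdx H r l then 1 else 0), ?_, ?_, ?_⟩
    · refine ⟨?_, ?_, ?_, ?_, ?_, ?_, ?_, ?_⟩
      · intro e _; dsimp only; constructor <;> (split <;> norm_num)
      · intro k i j hGadj
        unfold ySF
        rw [if_neg]
        rintro ⟨-, hadj, -⟩
        exact hGadj (hle hadj)
      · intro k i j; exact ⟨ySF_nonneg H r k i j, ySF_le_one H r k i j⟩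
      · intro k l _; dsimp only; constructor <;> (split <;> norm_num)
      · -- cut condition (1)
        intro k l hkl S hrS hTS
        dsimp only
        by_cases hk : k = repIdx H r l
        · have ht : ∃ t ∈ T l, t ∉ S := by
            by_contra hcon
            push_neg at hcon
            exact hTS (Finset.inter_eq_left.2 hcon)
          obtain ⟨t, htl, htS⟩ := ht
          have hrep : repIdx H r k = k := by
            rw [hk]; exact repIdx_idem H r l
          have hreach : H.Reachable (r k) t := by
            have h1 : H.Reachable (r k) (r l) := by rw [hk]; exact repIdx_reach H r l
            exact h1.trans (hconn l (r l) (hroot l) t htl)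
          have hrtg := ySF_rtg H r hrep hreach
          have hone := one_le_acutOut_of_rtg (ySF H r k) (ySF_nonneg H r k) S hrtg hrS htS
          calc (if k = repIdx H r l then (1:ℝ) else 0) = 1 := if_pos hk
            _ ≤ _ := hone
        · rw [if_neg hk]
          exact acutOut_nonneg _ (ySF_nonneg H r k) S
      · -- partition condition (2)
        intro k
        dsimp only
        rw [Finset.sum_ite_eq' (Finset.Iic k) (repIdx H r k) (fun _ => (1:ℝ))]
        exact if_pos (Finset.mem_Iic.2 (repIdx_le H r k))
      · -- condition (3)
        intro k l _ _ hkl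
        dsimp only
        by_cases hk : k = repIdx H r l
        · have h1 : H.Reachable (r k) (r l) := by rw [hk]; exact repIdx_reach H r l
          have h2 : k = repIdx H r k := by
            rw [repIdx_congr H r h1, ← hk]
          rw [if_pos hk, if_pos h2]
        · rw [if_neg hk]
          split <;> norm_num
      · -- capacity condition (4)
        intro i j hGadj
        dsimp only
        by_cases hHa : H.Adj i j
        · have hx : (if s(i,j) ∈ H.edgeSet then (1:ℝ) else 0) = 1 :=
            if_pos (H.mem_edgeSet.2 hHa)
          rw [hx]
          by_cases hex : ∀ k : Fin K, ySF H r k i j + ySF H r k j i = 0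
          · rw [Finset.sum_eq_zero fun k _ => hex k]; norm_num
          · push_neg at hex
            obtain ⟨k0, hk0⟩ := hex
            have hone0 : ySF H r k0 i j = 1 ∨ ySF H r k0 j i = 1 := by
              rcases ySF_mem H r k0 i j with h1 | h1 <;>
                rcases ySF_mem H r k0 j i with h2 | h2
              · exact absurd (by rw [h1, h2]; ring) hk0
              · exact Or.inr h2
              · exact Or.inl h1
              · exact Or.inl h1
            have hterm : ySF H r k0 i j + ySF H r k0 j i = 1 := by
              rcases hone0 with h | h
              · rw [h, ySF_antisym H hac r k0 h]; ring
              · rw [h, ySF_antisym H hac r k0 h]; ring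
            rw [Finset.sum_eq_single k0]
            · exact le_of_eq hterm
            · intro b _ hb
              by_contra hbne
              have honeb : ySF H r b i j = 1 ∨ ySF H r b j i = 1 := by
                rcases ySF_mem H r b i j with h1 | h1 <;>
                  rcases ySF_mem H r b j i with h2 | h2
                · exact absurd (by rw [h1, h2]; ring) hbne
                · exact Or.inr h2
                · exact Or.inl h1
                · exact Or.inl h1
              have hbk0 : b = k0 := by
                rcases honeb with h1 | h1 <;> rcases hone0 with h0 | h0
                · exact ySF_unique H r h1 h0 (SimpleGraph.Reachable.refl i)
                · exact ySF_unique H r h1 h0 hHa.reachable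
                · exact ySF_unique H r h1 h0 hHa.symm.reachable
                · exact ySF_unique H r h1 h0 (SimpleGraph.Reachable.refl j)
              exact hb hbk0
            · intro h; exact absurd (Finset.mem_univ k0) h
        · have hall : ∀ k : Fin K, ySF H r k i j + ySF H r k j i = 0 := by
            intro k
            have h1 : ySF H r k i j = 0 := by
              unfold ySF; rw [if_neg]; rintro ⟨-, hadj, -⟩; exact hHa hadj
            have h2 : ySF H r k j i = 0 := by
              unfold ySF; rw [if_neg]; rintro ⟨-, hadj, -⟩; exact hHa hadj.symm
            rw [h1, h2]; ring
          rw [Finset.sum_eq_zero fun k _ => hall k]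
          split <;> norm_num
    · -- integrality
      refine ⟨fun e _ => ?_, fun k i j => ySF_mem H r k i j, fun k l _ => ?_⟩
      · dsimp only; split <;> simp
      · dsimp only; split <;> simp
    · -- cost equality
      have hfil : G.edgeFinset.filter (fun e => e ∈ H.edgeSet) = H.edgeFinset := by
        ext e
        simp only [Finset.mem_filter, SimpleGraph.mem_edgeFinset]
        exact ⟨fun h => h.2, fun h => ⟨SimpleGraph.edgeSet_mono hle h, h⟩⟩
      dsimp only
      calc ∑ e ∈ G.edgeFinset, c e * (if e ∈ H.edgeSet then 1 else 0)
          = ∑ e ∈ G.edgeFinset, (if e ∈ H.edgeSet then c e else 0) := by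
            refine Finset.sum_congr rfl fun e _ => ?_
            split <;> ring
        _ = ∑ e ∈ G.edgeFinset.filter (fun e => e ∈ H.edgeSet), c e :=
            (Finset.sum_filter _ _).symm
        _ = ∑ e ∈ H.edgeFinset, c e := by rw [hfil]
  · -- Part (ii)
    intro x y z hmem hint
    obtain ⟨hxb, hy0, hyb, hzb, hcut, hsum, hzz, hcap⟩ := hmem
    obtain ⟨hxi, hyi, hzi⟩ := hint
    have hyadj : ∀ (k : Fin K) (a b : V), y k a b = 1 → (fromX G x).Adj a b := by
      intro k a b h1
      have hG : G.Adj a b := by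
        by_contra hGc
        rw [hy0 k a b hGc] at h1
        exact one_ne_zero h1.symm
      have hxle : x s(a, b) ≤ 1 := (hxb _ (G.mem_edgeSet.2 hG)).2
      have h1le : (1:ℝ) ≤ x s(a, b) := by
        have hba := (hyb k b a).1
        have hsingle : y k a b + y k b a ≤ ∑ k' : Fin K, (y k' a b + y k' b a) :=
          Finset.single_le_sum
            (fun k' _ => add_nonneg (hyb k' a b).1 (hyb k' b a).1) (Finset.mem_univ k)
        have := hcap a b hG
        linarith
      exact ⟨hG, le_antisymm hxle h1le⟩
    have hreach : ∀ (k : Fin K) (a b : V),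
        Relation.ReflTransGen (fun u v => y k u v = 1) a b → (fromX G x).Reachable a b := by
      intro k a b h
      induction h with
      | refl => exact SimpleGraph.Reachable.refl _
      | tail h1 h2 ih => exact ih.trans (hyadj _ _ _ h2).reachable
    constructor
    · intro k s hs t ht
      have hl : ∃ l ∈ Finset.Iic k, z l k = 1 := by
        by_contra hcon
        push_neg at hcon
        have hz0 : ∑ l ∈ Finset.Iic k, z l k = 0 := Finset.sum_eq_zero (fun l hlk => by
          rcases hzi l k (Finset.mem_Iic.1 hlk) with h | h
          · exact h
          · exact absurd h (hcon l hlk))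
        rw [hsum k] at hz0
        exact one_ne_zero hz0
      obtain ⟨l, hlk, hzl⟩ := hl
      have hlk' := Finset.mem_Iic.1 hlk
      set S : Finset V :=
        Finset.univ.filter (fun v => Relation.ReflTransGen (fun u w => y l u w = 1) (r l) v)
        with hSdef
      have hrS : r l ∈ S := Finset.mem_filter.2 ⟨Finset.mem_univ _, Relation.ReflTransGen.refl⟩
      have hTsub : ∀ t' ∈ T k, t' ∈ S := by
        intro t' ht'
        by_contra ht'S
        have hne : T k ∩ S ≠ T k := by
          intro heq
          have : t' ∈ T k ∩ S := heq.symm ▸ ht'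
          exact ht'S (Finset.mem_inter.1 this).2
        have hge := hcut l k hlk' S hrS hne
        rw [hzl] at hge
        have hzero : acutOut (y l) S = 0 := by
          unfold acutOut
          refine Finset.sum_eq_zero fun i hi => Finset.sum_eq_zero fun j hj => ?_
          rcases hyi l i j with h | h
          · exact h
          · exfalso
            have hiS : Relation.ReflTransGen (fun u w => y l u w = 1) (r l) i :=
              (Finset.mem_filter.1 hi).2
            have hjS : j ∈ S := Finset.mem_filter.2 ⟨Finset.mem_univ _, hiS.tail h⟩
            exact (Finset.mem_compl.1 hj) hjS
        rw [hzero] at hge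
        linarith
      have hrs := hreach l (r l) s (Finset.mem_filter.1 (hTsub s hs)).2
      have hrt := hreach l (r l) t (Finset.mem_filter.1 (hTsub t ht)).2
      exact hrs.symm.trans hrt
    · have hsub : (fromX G x).edgeFinset ⊆ G.edgeFinset :=
        SimpleGraph.edgeFinset_mono (fun a b hab => hab.1)
      have heq : ∀ e ∈ (fromX G x).edgeFinset, c e = c e * x e := by
        intro e he
        induction e using Sym2.ind with
        | _ a b =>
          have hx1 : x s(a, b) = 1 :=
            (((fromX G x).mem_edgeSet).1 (SimpleGraph.mem_edgeFinset.1 he)).2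
          rw [hx1, mul_one]
      rw [Finset.sum_congr rfl heq]
      refine Finset.sum_le_sum_of_subset_of_nonneg hsub ?_
      intro e heG _
      exact mul_nonneg (hc e (SimpleGraph.mem_edgeFinset.1 heG))
        (hxb e (SimpleGraph.mem_edgeFinset.1 heG)).1
end
end
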